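/- arXiv:1507.01622 — 6 statements merged into one kernel-verified Lean document; each statement's English description precedes it below -/
import Mathlib

section
/- Let α > −1, let q ≥ 0 be an integer, and let n ≥ 1 be an integer. Suppose G is a monic polynomial of degree 2n with real coefficients such that ∫_{−1}^{1} |x|^{2q+2} (1−x²)^α x^k G(x) dx = 0 for all integers 0 ≤ k ≤ 2n−1. Then ∫_{−1}^{1} x^{2q+1} (1−x²)^α (1−x) x^k G(x) dx = 0 for all integers 0 ≤ k ≤ 2n−1. -/
open MeasureTheory intervalIntegral Polynomial

/-! The reflection `x ↦ -x` preserves the positive weight `|x|^{2q+2}(1-x²)^α`, so `G(-x)`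
satisfies the same orthogonality relations as `G`. The difference `G(x) - G(-x)` has degree
`< 2n`, because the leading terms cancel in even degree, so it is orthogonal to itself and
vanishes: `G` is even. Since `(1 - x) x^{2q+1} = x^{2q+1} - x^{2q+2}`, every signed moment is a
difference of two moments `∫ x^{2q+1+k}(1-x²)^α G`; for `k ≥ 1` these are moments of the
positive weight, and for `k = 0` the integrand is odd. -/

open Set

lemma Polynomial.degree_sub_comp_neg_X_lt {R : Type*} [CommRing R] [IsDomain R] {p : R[X]}
    (hp : Even p.natDegree) : (p - p.comp (-X)).degree < p.natDegree := by
  rcases eq_or_ne p 0 with rfl | hp0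
  · simp
  have hdeg : (p.comp (-X)).natDegree = p.natDegree := by simp [natDegree_comp]
  have hcomp0 : p.comp (-X) ≠ 0 := fun h => hp0 <| by
    simpa [h] using (comp_neg_X_comp_neg_X p).symm
  rw [← degree_eq_natDegree hp0]
  refine degree_sub_lt_left ?_ hp0 ?_
  · rw [degree_eq_natDegree hp0, degree_eq_natDegree hcomp0, hdeg]
  · rw [leadingCoeff_comp (by simp), leadingCoeff_neg, leadingCoeff_X, hp.neg_one_pow, mul_one]

lemma Function.Odd.intervalIntegral_eq_zero {f : ℝ → ℝ} (hf : f.Odd) (a : ℝ) :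
    ∫ x in -a..a, f x = 0 := by
  have h := integral_comp_neg (a := -a) (b := a) f
  simp only [neg_neg, hf.eq, intervalIntegral.integral_neg] at h
  linarith

lemma intervalIntegrable_one_sub_sq_rpow {α : ℝ} (hα : -1 < α) :
    IntervalIntegrable (fun x : ℝ => (1 - x ^ 2) ^ α) volume (-1) 1 := by
  have right : IntervalIntegrable (fun x : ℝ => (1 - x ^ 2) ^ α) volume 0 1 := by
    have h : IntervalIntegrable (fun x : ℝ => (1 - x) ^ α) volume 0 1 := by
      simpa using (intervalIntegrable_rpow' hα (a := 1) (b := 0)).comp_sub_left 1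
    refine (h.mul_continuousOn (g := fun x => (1 + x) ^ α) ?_).congr ?_
    · exact ContinuousOn.rpow_const (by fun_prop) fun x hx => by
        left; rw [uIcc_of_le zero_le_one] at hx; linarith [hx.1]
    · intro x hx
      rw [uIoc_of_le zero_le_one] at hx
      dsimp only
      rw [← Real.mul_rpow (by linarith [hx.2]) (by linarith [hx.1])]
      ring_nf
  have left : IntervalIntegrable (fun x : ℝ => (1 - x ^ 2) ^ α) volume (-1) 0 := by
    simpa using (IntervalIntegrable.iff_comp_neg (by simp)).mp right.symm
  exact left.trans right

section OrthogonalPolynomials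

variable {w : ℝ → ℝ}

lemma integral_mul_pow_mul_eval_comp_neg_X (hw : w.Even) (a : ℝ) (k : ℕ) (p : ℝ[X]) :
    ∫ x in -a..a, w x * x ^ k * (p.comp (-X)).eval x =
      (-1) ^ k * ∫ x in -a..a, w x * x ^ k * p.eval x := by
  have h := integral_comp_neg (a := -a) (b := a) fun x => (-1) ^ k * (w x * x ^ k * p.eval x)
  rw [neg_neg] at h
  rw [← intervalIntegral.integral_const_mul, ← h]
  congr 1 with x
  simp only [eval_comp, eval_neg, eval_X, hw.eq, neg_pow x]
  have hsign : (-1 : ℝ) ^ k * (-1) ^ k = 1 := by rw [← mul_pow, neg_one_mul, neg_neg, one_pow]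
  linear_combination -(w x * x ^ k * p.eval (-x)) * hsign

lemma integral_mul_eval_mul_eval_eq_zero_of_degree_lt {a b : ℝ} {m : ℕ} {p q : ℝ[X]}
    (hint : ∀ k < m, IntervalIntegrable (fun x => w x * x ^ k * p.eval x) volume a b)
    (horth : ∀ k < m, ∫ x in a..b, w x * x ^ k * p.eval x = 0) (hq : q.degree < m) :
    ∫ x in a..b, w x * q.eval x * p.eval x = 0 := by
  rcases eq_or_ne q 0 with rfl | hq0
  · simp
  have hsum : ∀ x, w x * q.eval x * p.eval x =
      ∑ k ∈ Finset.range m, q.coeff k * (w x * x ^ k * p.eval x) := by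
    intro x
    rw [eval_eq_sum_range' ((natDegree_lt_iff_degree_lt hq0).mpr hq), Finset.mul_sum,
      Finset.sum_mul]
    exact Finset.sum_congr rfl fun k _ => by ring
  simp_rw [hsum]
  rw [intervalIntegral.integral_finsetSum fun k hk =>
    (hint k (Finset.mem_range.mp hk)).const_mul _]
  exact Finset.sum_eq_zero fun k hk => by
    rw [intervalIntegral.integral_const_mul, horth k (Finset.mem_range.mp hk), mul_zero]

lemma eq_zero_of_integral_mul_eval_mul_self_eq_zero {a b : ℝ} (hab : a < b) {p : ℝ[X]}
    (hw : ∀ᵐ x ∂volume.restrict (Ioc a b), 0 < w x)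
    (hint : IntervalIntegrable (fun x => w x * p.eval x * p.eval x) volume a b)
    (h : ∫ x in a..b, w x * p.eval x * p.eval x = 0) : p = 0 := by
  by_contra hp
  have hroots : ∀ᵐ x ∂volume.restrict (Ioc a b), p.eval x ≠ 0 :=
    ae_restrict_of_ae <| measure_eq_zero_iff_ae_notMem.mp <|
      (p.finite_setOfPred_isRoot hp).measure_zero _
  have hnonneg : 0 ≤ᵐ[volume.restrict (Ioc a b)] fun x => w x * p.eval x * p.eval x :=
    hw.mono fun x hx => show (0 : ℝ) ≤ _ by
      simpa only [mul_assoc] using mul_nonneg hx.le (mul_self_nonneg _)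
  have hzero := (integral_eq_zero_iff_of_le_of_nonneg_ae hab.le hnonneg hint).mp h
  have hfalse : ∀ᵐ x ∂volume.restrict (Ioc a b), False := by
    filter_upwards [hw, hroots, hzero] with x hwx hpx hzx
    simp [hwx.ne', hpx] at hzx
  rw [Filter.eventually_false_iff_eq_bot, ae_eq_bot, Measure.restrict_eq_zero, Real.volume_Ioc,
    ENNReal.ofReal_eq_zero] at hfalse
  linarith

lemma even_eval_of_orthogonal {a : ℝ} (ha : 0 < a) (hw : w.Even)
    (hw_pos : ∀ᵐ x ∂volume.restrict (Ioc (-a) a), 0 < w x)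
    (hw_int : ∀ r : ℝ[X], IntervalIntegrable (fun x => w x * r.eval x) volume (-a) a)
    {p : ℝ[X]} (hp : Even p.natDegree)
    (horth : ∀ k < p.natDegree, ∫ x in -a..a, w x * x ^ k * p.eval x = 0) :
    Function.Even fun x => p.eval x := by
  set d := p - p.comp (-X)
  have hint (k : ℕ) (r : ℝ[X]) :
      IntervalIntegrable (fun x => w x * x ^ k * r.eval x) volume (-a) a := by
    have h := hw_int (X ^ k * r)
    simp only [eval_mul, eval_pow, eval_X] at h
    simpa only [mul_assoc] using h
  have hd_orth : ∀ k < p.natDegree, ∫ x in -a..a, w x * x ^ k * d.eval x = 0 := by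
    intro k hk
    simp only [d, eval_sub, mul_sub]
    rw [intervalIntegral.integral_sub (hint k p) (hint k _),
      integral_mul_pow_mul_eval_comp_neg_X hw, horth k hk, mul_zero, sub_zero]
  have hd : d = 0 := by
    refine eq_zero_of_integral_mul_eval_mul_self_eq_zero (by linarith) hw_pos ?_ ?_
    · simpa only [eval_mul, mul_assoc] using hw_int (d * d)
    · exact integral_mul_eval_mul_eval_eq_zero_of_degree_lt (fun k _ => hint k d) hd_orth
        (degree_sub_comp_neg_X_lt hp)
  intro x
  simpa [d, sub_eq_zero, eval_comp] using congr_arg (eval (-x)) hd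

end OrthogonalPolynomials

noncomputable def genGegenbauerWeight (α : ℝ) (q : ℕ) (x : ℝ) : ℝ :=
  |x| ^ (2 * q + 2) * (1 - x ^ 2) ^ α

lemma genGegenbauerWeight_even (α : ℝ) (q : ℕ) : (genGegenbauerWeight α q).Even := by
  intro x
  simp [genGegenbauerWeight]

lemma ae_genGegenbauerWeight_pos (α : ℝ) (q : ℕ) :
    ∀ᵐ x ∂volume.restrict (Ioc (-1) 1), 0 < genGegenbauerWeight α q x := by
  filter_upwards [ae_restrict_mem measurableSet_Ioc, ae_restrict_of_ae (volume.ae_ne 0),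
    ae_restrict_of_ae (volume.ae_ne 1)] with x hx hx0 hx1
  have h : 0 < 1 - x ^ 2 := by nlinarith [lt_of_le_of_ne hx.2 hx1, hx.1]
  exact mul_pos (pow_pos (abs_pos.mpr hx0) _) (Real.rpow_pos_of_pos h α)

lemma intervalIntegrable_genGegenbauerWeight_mul_eval {α : ℝ} (hα : -1 < α) (q : ℕ)
    (r : ℝ[X]) :
    IntervalIntegrable (fun x => genGegenbauerWeight α q x * r.eval x) volume (-1) 1 :=
  ((intervalIntegrable_one_sub_sq_rpow hα).continuousOn_mul (by fun_prop)).mul_continuousOn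
    r.continuous.continuousOn

theorem gg_orthogonal_signed_weight_general (α : ℝ) (hα : -1 < α) (q : ℕ) (n : ℕ)
    (G : Polynomial ℝ) (hGd : G.natDegree = 2 * n)
    (hG : ∀ k : ℕ, k < 2 * n →
      ∫ x in (-1 : ℝ)..1, |x| ^ (2 * q + 2) * (1 - x ^ 2) ^ α * x ^ k * G.eval x = 0) :
    ∀ k : ℕ, k < 2 * n →
      ∫ x in (-1 : ℝ)..1, x ^ (2 * q + 1) * (1 - x ^ 2) ^ α * (1 - x) * x ^ k * G.eval x = 0 := by
  have hGeven : Function.Even fun x => G.eval x :=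
    even_eval_of_orthogonal one_pos (genGegenbauerWeight_even α q)
      (ae_genGegenbauerWeight_pos α q) (intervalIntegrable_genGegenbauerWeight_mul_eval hα q)
      (hGd ▸ even_two_mul n) (hGd ▸ hG)
  have hint : ∀ k : ℕ, IntervalIntegrable
      (fun x => x ^ (2 * q + 1) * (1 - x ^ 2) ^ α * x ^ k * G.eval x) volume (-1) 1 := fun k =>
    (((intervalIntegrable_one_sub_sq_rpow hα).continuousOn_mul (by fun_prop)).mul_continuousOn
      (by fun_prop)).mul_continuousOn G.continuous.continuousOn
  have hmoment : ∀ k ≤ 2 * n,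
      ∫ x in (-1 : ℝ)..1, x ^ (2 * q + 1) * (1 - x ^ 2) ^ α * x ^ k * G.eval x = 0 := by
    rintro (_ | j) hj
    · refine Function.Odd.intervalIntegral_eq_zero (fun x => ?_) 1
      simp [hGeven.eq, (odd_two_mul_add_one q).neg_pow]
    · rw [← hG j (by omega)]
      congr 1 with x
      rw [Even.pow_abs ⟨q + 1, by ring⟩]
      ring
  intro k hk
  calc ∫ x in (-1 : ℝ)..1, x ^ (2 * q + 1) * (1 - x ^ 2) ^ α * (1 - x) * x ^ k * G.eval x
      = ∫ x in (-1 : ℝ)..1, x ^ (2 * q + 1) * (1 - x ^ 2) ^ α * x ^ k * G.eval x -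
          x ^ (2 * q + 1) * (1 - x ^ 2) ^ α * x ^ (k + 1) * G.eval x := by
        congr 1 with x
        ring
    _ = 0 := by
        rw [intervalIntegral.integral_sub (hint k) (hint (k + 1)), hmoment k hk.le,
          hmoment (k + 1) hk, sub_zero]

/-- The monic generalized Gegenbauer polynomial `G` of degree `2n` for the weight
`|x|^{2q+2}(1−x²)^α` is also orthogonal to `x^k`, `0 ≤ k ≤ 2n−1`, with respect to the
signed weight `x^{2q+1}(1−x²)^α(1−x)` on `(−1,1)`. -/
theorem gg_orthogonal_signed_weight (α : ℝ) (hα : -1 < α) (q : ℕ) (n : ℕ) (hn : 1 ≤ n)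
    (G : Polynomial ℝ) (hGm : G.Monic) (hGd : G.natDegree = 2 * n)
    (hG : ∀ k : ℕ, k < 2 * n →
      ∫ x in (-1 : ℝ)..1, |x| ^ (2 * q + 2) * (1 - x ^ 2) ^ α * x ^ k * G.eval x = 0) :
    ∀ k : ℕ, k < 2 * n →
      ∫ x in (-1 : ℝ)..1, x ^ (2 * q + 1) * (1 - x ^ 2) ^ α * (1 - x) * x ^ k * G.eval x = 0 :=
  gg_orthogonal_signed_weight_general α hα q n G hGd hG
end

section
/- Let α > −1, let q ≥ 0 be an integer, and let n ≥ 1 be an integer. Suppose G is a monic polynomial of degree 2n with real coefficients such that ∫_{−1}^{1} |x|^{2q+2} (1−x²)^α x^k G(x) dx = 0 for all integers 0 ≤ k ≤ 2n−1. Then ∫_{−1}^{1} x^{2q+1} (1−x²)^α (1−x) x^{2n} G(x) dx = −∫_{−1}^{1} |x|^{2q+2} (1−x²)^α x^{2n} G(x) dx, and this quantity is nonzero (indeed strictly negative). -/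
open MeasureTheory intervalIntegral Polynomial

lemma ii_congr_Ioc {a b : ℝ} (hab : a ≤ b) {f g : ℝ → ℝ}
    (hf : IntervalIntegrable f volume a b) (h : ∀ x ∈ Set.Ioc a b, f x = g x) :
    IntervalIntegrable g volume a b := by
  rw [intervalIntegrable_iff_integrableOn_Ioc_of_le hab] at hf ⊢
  exact hf.congr_fun h measurableSet_Ioc

lemma weight_ii (α : ℝ) (hα : -1 < α) :
    IntervalIntegrable (fun x : ℝ => (1 - x ^ 2) ^ α) volume (-1) 1 := by
  have h1 : IntervalIntegrable (fun x : ℝ => (1 - x) ^ α) volume 0 1 := by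
    simpa using ((intervalIntegrable_rpow' hα (a := (0:ℝ)) (b := 1)).comp_sub_left 1).symm
  have h2 : IntervalIntegrable (fun x : ℝ => (1 + x) ^ α) volume (-1) 0 := by
    have := (intervalIntegrable_rpow' hα (a := (0:ℝ)) (b := 1)).comp_add_right 1
    norm_num at this
    simpa [add_comm] using this
  have c1 : ContinuousOn (fun x : ℝ => (1 + x) ^ α) (Set.uIcc 0 1) := by
    apply ContinuousOn.rpow_const (by fun_prop)
    intro x hx
    rw [Set.uIcc_of_le (by norm_num)] at hx
    exact Or.inl (by nlinarith [hx.1])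
  have c2 : ContinuousOn (fun x : ℝ => (1 - x) ^ α) (Set.uIcc (-1) 0) := by
    apply ContinuousOn.rpow_const (by fun_prop)
    intro x hx
    rw [Set.uIcc_of_le (by norm_num)] at hx
    exact Or.inl (by nlinarith [hx.2])
  have k1 : IntervalIntegrable (fun x : ℝ => (1 - x ^ 2) ^ α) volume 0 1 := by
    refine ii_congr_Ioc (by norm_num) (h1.mul_continuousOn c1) ?_
    intro x hx
    rw [← Real.mul_rpow (by nlinarith [hx.2]) (by nlinarith [hx.1])]
    ring_nf
  have k2 : IntervalIntegrable (fun x : ℝ => (1 - x ^ 2) ^ α) volume (-1) 0 := by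
    refine ii_congr_Ioc (by norm_num) (h2.continuousOn_mul c2) ?_
    intro x hx
    rw [← Real.mul_rpow (by nlinarith [hx.2]) (by nlinarith [hx.1])]
    ring_nf
  exact k2.trans k1

lemma weight_mul_cont (α : ℝ) (hα : -1 < α) {f : ℝ → ℝ} (hf : Continuous f) :
    IntervalIntegrable (fun x : ℝ => (1 - x ^ 2) ^ α * f x) volume (-1) 1 :=
  (weight_ii α hα).mul_continuousOn hf.continuousOn

lemma abs_pow_even' (x : ℝ) (q : ℕ) : |x| ^ (2 * q + 2) = x ^ (2 * q + 2) := by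
  have h : 2 * q + 2 = 2 * (q + 1) := by ring
  rw [h, pow_mul, pow_mul, sq_abs]

/-- For the monic generalized Gegenbauer polynomial `G` of degree `2n` for the weight
`|x|^{2q+2}(1−x²)^α`, the signed-weight moment of order `2n` equals minus the corresponding
positive-weight moment, and it is strictly negative (in particular nonzero). -/
theorem gg_signed_weight_top_moment (α : ℝ) (hα : -1 < α) (q : ℕ) (n : ℕ) (hn : 1 ≤ n)
    (G : Polynomial ℝ) (hGm : G.Monic) (hGd : G.natDegree = 2 * n)
    (hG : ∀ k : ℕ, k < 2 * n →
      ∫ x in (-1 : ℝ)..1, |x| ^ (2 * q + 2) * (1 - x ^ 2) ^ α * x ^ k * G.eval x = 0) :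
    (∫ x in (-1 : ℝ)..1,
        x ^ (2 * q + 1) * (1 - x ^ 2) ^ α * (1 - x) * x ^ (2 * n) * G.eval x)
      = -∫ x in (-1 : ℝ)..1, |x| ^ (2 * q + 2) * (1 - x ^ 2) ^ α * x ^ (2 * n) * G.eval x ∧
    (∫ x in (-1 : ℝ)..1,
        x ^ (2 * q + 1) * (1 - x ^ 2) ^ α * (1 - x) * x ^ (2 * n) * G.eval x) < 0 := by
  obtain ⟨m, rfl⟩ : ∃ m, n = m + 1 := ⟨n - 1, by omega⟩
  have hGne : G ≠ 0 := hGm.ne_zero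
  have II : ∀ k : ℕ,
      IntervalIntegrable (fun x : ℝ => (1 - x ^ 2) ^ α * (x ^ k * G.eval x)) volume (-1) 1 :=
    fun k => weight_mul_cont α hα (by fun_prop)
  have hJ : ∀ k : ℕ, k < 2 * (m + 1) →
      (∫ x in (-1:ℝ)..1, (1 - x ^ 2) ^ α * (x ^ (2 * q + 2 + k) * G.eval x)) = 0 := by
    intro k hk
    rw [← hG k hk]
    apply intervalIntegral.integral_congr
    intro x _
    simp only
    rw [abs_pow_even']
    ring
  have key : ∀ P : Polynomial ℝ, P.natDegree < 2 * (m + 1) →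
      (∫ x in (-1:ℝ)..1, (1 - x ^ 2) ^ α * (x ^ (2 * q + 2) * P.eval x * G.eval x)) = 0 := by
    intro P hP
    have hpt : ∀ x ∈ Set.uIcc (-1:ℝ) 1,
        (1 - x ^ 2) ^ α * (x ^ (2 * q + 2) * P.eval x * G.eval x)
          = ∑ i ∈ Finset.range (2 * (m + 1)),
              P.coeff i * ((1 - x ^ 2) ^ α * (x ^ (2 * q + 2 + i) * G.eval x)) := by
      intro x _
      rw [Polynomial.eval_eq_sum_range' hP]
      rw [Finset.mul_sum, Finset.sum_mul, Finset.mul_sum]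
      refine Finset.sum_congr rfl fun i _ => ?_
      ring
    rw [intervalIntegral.integral_congr hpt,
      intervalIntegral.integral_finset_sum (fun i _ => (II (2 * q + 2 + i)).const_mul _)]
    refine Finset.sum_eq_zero fun i hi => ?_
    rw [intervalIntegral.integral_const_mul, hJ _ (Finset.mem_range.mp hi), mul_zero]
  -- rewrite of the signed integral
  have e1 : (∫ x in (-1 : ℝ)..1,
        x ^ (2 * q + 1) * (1 - x ^ 2) ^ α * (1 - x) * x ^ (2 * (m + 1)) * G.eval x)
      = -∫ x in (-1:ℝ)..1,
          (1 - x ^ 2) ^ α * (x ^ (2 * q + 2 + (2 * m + 2)) * G.eval x) := by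
    have hpt : ∀ x ∈ Set.uIcc (-1:ℝ) 1,
        x ^ (2 * q + 1) * (1 - x ^ 2) ^ α * (1 - x) * x ^ (2 * (m + 1)) * G.eval x
          = (1 - x ^ 2) ^ α * (x ^ (2 * q + 2 + (2 * m + 1)) * G.eval x)
            - (1 - x ^ 2) ^ α * (x ^ (2 * q + 2 + (2 * m + 2)) * G.eval x) := by
      intro x _; ring
    rw [intervalIntegral.integral_congr hpt,
      intervalIntegral.integral_sub (II _) (II _), hJ (2 * m + 1) (by omega), zero_sub]
  have e2 : (∫ x in (-1 : ℝ)..1, |x| ^ (2 * q + 2) * (1 - x ^ 2) ^ α * x ^ (2 * (m + 1)) * G.eval x)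
      = ∫ x in (-1:ℝ)..1, (1 - x ^ 2) ^ α * (x ^ (2 * q + 2 + (2 * m + 2)) * G.eval x) := by
    apply intervalIntegral.integral_congr
    intro x _
    simp only
    rw [abs_pow_even']
    ring
  -- positivity
  set Q : ℝ → ℝ := fun x => (1 - x ^ 2) ^ α * (x ^ (2 * q + 2) * (G.eval x) ^ 2) with hQdef
  have hQint : IntervalIntegrable Q volume (-1) 1 := weight_mul_cont α hα (by fun_prop)
  have hQpos : 0 < ∫ x in (-1:ℝ)..1, Q x := by
    rw [intervalIntegral.integral_of_le (by norm_num : (-1:ℝ) ≤ 1)]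
    have hQi : IntegrableOn Q (Set.Ioc (-1) 1) :=
      (intervalIntegrable_iff_integrableOn_Ioc_of_le (by norm_num)).mp hQint
    refine (setIntegral_pos_iff_support_of_nonneg_ae ?_ hQi).mpr ?_
    · refine (ae_restrict_iff' measurableSet_Ioc).mpr (ae_of_all _ fun x hx => ?_)
      have h2 : (0:ℝ) ≤ x ^ (2 * q + 2) := by
        have := pow_nonneg (abs_nonneg x) (2 * q + 2)
        rwa [abs_pow_even'] at this
      exact mul_nonneg (Real.rpow_nonneg (by nlinarith [hx.1, hx.2]) _)
        (mul_nonneg h2 (sq_nonneg _))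
    · have hS : ({x : ℝ | G.IsRoot x} ∪ {0}).Finite :=
        (Polynomial.finite_setOf_isRoot hGne).union (Set.finite_singleton 0)
      have hsub : Set.Ioo (-1:ℝ) 1 \ ({x : ℝ | G.IsRoot x} ∪ {0})
          ⊆ Function.support Q ∩ Set.Ioc (-1) 1 := by
        rintro x ⟨hx, hxn⟩
        refine ⟨?_, hx.1, hx.2.le⟩
        have h1 : 0 < (1 - x ^ 2) ^ α :=
          Real.rpow_pos_of_pos (by nlinarith [hx.1, hx.2]) α
        have hx0 : x ≠ 0 := fun h => hxn (Or.inr (by simp [h]))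
        have hxr : G.eval x ≠ 0 := fun h => hxn (Or.inl h)
        have h2 : 0 < x ^ (2 * q + 2) := by
          rw [← abs_pow_even']; exact pow_pos (abs_pos.mpr hx0) _
        have h3 : 0 < (G.eval x) ^ 2 := by positivity
        exact Function.mem_support.mpr (ne_of_gt (mul_pos h1 (mul_pos h2 h3)))
      calc (0:ENNReal) < volume (Set.Ioo (-1:ℝ) 1 \ ({x : ℝ | G.IsRoot x} ∪ {0})) := by
            rw [measure_diff_null (hS.measure_zero _), Real.volume_Ioo]
            norm_num
        _ ≤ volume (Function.support Q ∩ Set.Ioc (-1:ℝ) 1) := measure_mono hsub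
  -- decompose top moment
  set P : Polynomial ℝ := Polynomial.X ^ (2 * (m + 1)) - G with hPdef
  have hPd : P.natDegree < 2 * (m + 1) := by
    by_cases hP0 : P = 0
    · rw [hP0]; simp
    · have hdeg : P.degree < (2 * (m + 1) : ℕ) := by
        have := Polynomial.degree_sub_lt
          (p := Polynomial.X ^ (2 * (m + 1))) (q := G)
          (by rw [Polynomial.degree_X_pow, Polynomial.degree_eq_natDegree hGne, hGd])
          (pow_ne_zero _ Polynomial.X_ne_zero)
          (by rw [Polynomial.leadingCoeff_X_pow, hGm.leadingCoeff])
        rwa [Polynomial.degree_X_pow] at this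
      exact (Polynomial.natDegree_lt_iff_degree_lt hP0).mpr hdeg
  have hdec : (∫ x in (-1:ℝ)..1, (1 - x ^ 2) ^ α * (x ^ (2 * q + 2 + (2 * m + 2)) * G.eval x))
      = (∫ x in (-1:ℝ)..1, Q x)
        + ∫ x in (-1:ℝ)..1, (1 - x ^ 2) ^ α * (x ^ (2 * q + 2) * P.eval x * G.eval x) := by
    rw [← intervalIntegral.integral_add hQint (weight_mul_cont α hα (by fun_prop))]
    apply intervalIntegral.integral_congr
    intro x _
    simp only [hQdef, hPdef, Polynomial.eval_sub, Polynomial.eval_pow, Polynomial.eval_X]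
    have h2m : 2 * (m + 1) = 2 * m + 2 := by ring
    rw [h2m]
    ring
  have hJtop : 0 < ∫ x in (-1:ℝ)..1,
      (1 - x ^ 2) ^ α * (x ^ (2 * q + 2 + (2 * m + 2)) * G.eval x) := by
    rw [hdec, key P hPd, add_zero]; exact hQpos
  refine ⟨by rw [e1, e2], ?_⟩
  rw [e1]
  exact neg_neg_of_pos hJtop
end

section
/- Let α > −1, let q ≥ 0 be an integer, and let n ≥ 1 be an integer. Suppose G is a monic polynomial of degree 2n with real coefficients such that ∫_{−1}^{1} |x|^{2q+2} (1−x²)^α x^k G(x) dx = 0 for all integers 0 ≤ k ≤ 2n−1. Then G(x) = Σ_{k=0}^{n} [(−n)_k (−n−q−1/2)_k / (k! (−2n−α−q−1/2)_k)] x^{2n−2k} for all real x. -/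
/-!
Put `β = q + 1/2`, `w(x) = |x|^{2q+2} (1-x²)^α` and `J(p) = ∫₀¹ w(x) p(x²) dx`. For the operator
`𝒟 r = t(1-t) r' + (β + 1 - (α + β + 2) t) r` one has
`2 w(x) (𝒟 r)(x²) = (x^{2q+3} (1-x²)^{α+1} r(x²))'`, the derivative of a function vanishing at `0`
and `1`, so `J` kills the image of `𝒟`. As `s 𝒟 p' - p 𝒟 s' = 𝒟 (s p' - p s')`, the hypergeometric
operator `p ↦ 𝒟 p'` is symmetric for `J`. The Pochhammer quotients satisfy exactly the recurrence
that makes `p = Σ c_k t^{n-k}` an eigenpolynomial, with eigenvalue `-n(n+α+β+1)`; these eigenvalues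
are distinct, so `J(t^m p) = 0` for `m < n`. Hence `p(x²)` is orthogonal on `[-1,1]` to the even
powers below `x^{2n}`, and to the odd ones by parity. Two monic orthogonal polynomials of the same
degree coincide, since their difference `D` satisfies `∫ w D² = 0`.
-/

open MeasureTheory intervalIntegral Polynomial

/-- Pochhammer symbol `(a)_k = a (a+1) ⋯ (a+k-1)`. -/
noncomputable def poch (a : ℝ) (k : ℕ) : ℝ := ∏ i ∈ Finset.range k, (a + i)

/-- `Peven α q n x = P_{2n}^{α,q}(x)`, the monic generalized Gegenbauer-type polynomial
`Σ_{k=0}^{n} (−n)_k (−n−q−1/2)_k / (k! (−2n−α−q−1/2)_k) x^{2n−2k}`. -/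
noncomputable def Peven (α : ℝ) (q n : ℕ) (x : ℝ) : ℝ :=
  ∑ k ∈ Finset.range (n + 1),
    poch (-(n : ℝ)) k * poch (-(n : ℝ) - q - 1/2) k /
      ((Nat.factorial k : ℝ) * poch (-(2 * (n : ℝ)) - α - q - 1/2) k) * x ^ (2*n - 2*k)

/-- `Podd α q n x = P_{2n+1}^{α,q}(x) = (1+x) P_{2n}^{α+1,q}(x)`. -/
noncomputable def Podd (α : ℝ) (q n : ℕ) (x : ℝ) : ℝ := (1 + x) * Peven (α + 1) q n x

/-- `P α q n x = P_n^{α,q}(x)`. -/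
noncomputable def P (α : ℝ) (q : ℕ) (n : ℕ) (x : ℝ) : ℝ :=
  if Even n then Peven α q (n / 2) x else Podd α q (n / 2) x

lemma intervalIntegrable_neg_zero_of_comp_neg {f : ℝ → ℝ} {a : ℝ}
    (hint : IntervalIntegrable (fun x => f (-x)) volume 0 a) :
    IntervalIntegrable f volume (-a) 0 := by
  rw [IntervalIntegrable.iff_comp_neg]
  simpa using hint.symm

lemma integral_neg_to_self_of_even {f : ℝ → ℝ} (hf : ∀ x, f (-x) = f x) {a : ℝ}
    (hint : IntervalIntegrable f volume 0 a) :
    ∫ x in -a..a, f x = 2 * ∫ x in 0..a, f x := by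
  have hneg : ∫ x in -a..0, f x = ∫ x in 0..a, f x := by
    simpa [hf] using (integral_comp_neg (a := 0) (b := a) f).symm
  rw [← integral_add_adjacent_intervals (b := 0)
    (intervalIntegrable_neg_zero_of_comp_neg (by simpa [hf] using hint)) hint, hneg]
  ring

lemma integral_neg_to_self_of_odd {f : ℝ → ℝ} (hf : ∀ x, f (-x) = -f x) {a : ℝ}
    (hint : IntervalIntegrable f volume 0 a) :
    ∫ x in -a..a, f x = 0 := by
  have hneg : ∫ x in -a..0, f x = -∫ x in 0..a, f x := by
    simpa [hf] using (integral_comp_neg (a := 0) (b := a) f).symm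
  rw [← integral_add_adjacent_intervals (b := 0)
    (intervalIntegrable_neg_zero_of_comp_neg (by simp only [hf]; exact hint.neg)) hint, hneg]
  ring

section Orthogonality

variable {w : ℝ → ℝ} {a b : ℝ}

lemma intervalIntegrable_mul_X_pow_mul_eval
    (hint : ∀ p : ℝ[X], IntervalIntegrable (fun x => w x * p.eval x) volume a b)
    (k : ℕ) (p : ℝ[X]) :
    IntervalIntegrable (fun x => w x * x ^ k * p.eval x) volume a b := by
  have := hint (X ^ k * p)
  simp only [eval_mul, eval_pow, eval_X, ← mul_assoc] at this
  exact this

lemma integral_mul_eval_sq_eq_zero_of_orthogonal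
    (hint : ∀ p : ℝ[X], IntervalIntegrable (fun x => w x * p.eval x) volume a b)
    {N : ℕ} {D : ℝ[X]} (hD : D.natDegree < N)
    (horth : ∀ k < N, ∫ x in a..b, w x * x ^ k * D.eval x = 0) :
    ∫ x in a..b, w x * D.eval x ^ 2 = 0 := by
  have hexpand : ∀ x, w x * D.eval x ^ 2 =
      ∑ k ∈ Finset.range N, D.coeff k * (w x * x ^ k * D.eval x) := fun x => by
    calc w x * D.eval x ^ 2 = (∑ k ∈ Finset.range N, D.coeff k * x ^ k) * (w x * D.eval x) := by
          rw [← eval_eq_sum_range' hD]; ring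
      _ = _ := by rw [Finset.sum_mul]; exact Finset.sum_congr rfl fun k _ => by ring
  simp only [hexpand]
  rw [integral_finsetSum fun k _ =>
    (intervalIntegrable_mul_X_pow_mul_eval hint k D).const_mul (D.coeff k)]
  exact Finset.sum_eq_zero fun k hk => by
    rw [intervalIntegral.integral_const_mul, horth k (Finset.mem_range.mp hk), mul_zero]

lemma eq_zero_of_integral_mul_eval_sq_eq_zero (hab : a < b)
    (hw : ∀ᵐ x ∂volume.restrict (Set.Ioo a b), 0 < w x) {D : ℝ[X]}
    (hint : IntervalIntegrable (fun x => w x * D.eval x ^ 2) volume a b)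
    (h : ∫ x in a..b, w x * D.eval x ^ 2 = 0) : D = 0 := by
  rw [integral_of_le hab.le, integral_Ioc_eq_integral_Ioo] at h
  have hnonneg : 0 ≤ᵐ[volume.restrict (Set.Ioo a b)] fun x => w x * D.eval x ^ 2 := by
    filter_upwards [hw] with x hx using by positivity
  have hzero := (setIntegral_eq_zero_iff_of_nonneg_ae hnonneg
    ((intervalIntegrable_iff_integrableOn_Ioo_of_le hab.le).mp hint)).mp h
  by_contra hD
  have hroots : ∀ᵐ x ∂volume.restrict (Set.Ioo a b), ¬ D.IsRoot x :=
    ae_restrict_of_ae (measure_eq_zero_iff_ae_notMem.mp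
      ((finite_setOfPred_isRoot hD).measure_zero volume))
  have hfalse : ∀ᵐ x ∂volume.restrict (Set.Ioo a b), False := by
    filter_upwards [hzero, hw, hroots] with x hx hwx hroot
    exact hroot (pow_eq_zero_iff two_ne_zero |>.mp
      ((mul_eq_zero.mp hx).resolve_left hwx.ne'))
  rw [Filter.eventually_false_iff_eq_bot, ae_eq_bot, Measure.restrict_eq_zero,
    Real.volume_Ioo] at hfalse
  simp only [ENNReal.ofReal_eq_zero, tsub_le_iff_right, zero_add] at hfalse
  exact hfalse.not_gt hab

theorem eq_of_isMonicOfDegree_of_orthogonal (hab : a < b)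
    (hw : ∀ᵐ x ∂volume.restrict (Set.Ioo a b), 0 < w x)
    (hint : ∀ p : ℝ[X], IntervalIntegrable (fun x => w x * p.eval x) volume a b)
    {N : ℕ} {P Q : ℝ[X]} (hP : IsMonicOfDegree P N) (hQ : IsMonicOfDegree Q N)
    (hPo : ∀ k < N, ∫ x in a..b, w x * x ^ k * P.eval x = 0)
    (hQo : ∀ k < N, ∫ x in a..b, w x * x ^ k * Q.eval x = 0) : P = Q := by
  rcases eq_or_ne N 0 with rfl | hN
  · rw [isMonicOfDegree_zero_iff.mp hP, isMonicOfDegree_zero_iff.mp hQ]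
  have horth : ∀ k < N, ∫ x in a..b, w x * x ^ k * (P - Q).eval x = 0 := fun k hk => by
    simp only [eval_sub, mul_sub]
    rw [integral_sub (intervalIntegrable_mul_X_pow_mul_eval hint k P)
      (intervalIntegrable_mul_X_pow_mul_eval hint k Q), hPo k hk, hQo k hk, sub_zero]
  rw [← sub_eq_zero]
  refine eq_zero_of_integral_mul_eval_sq_eq_zero hab hw ?_
    (integral_mul_eval_sq_eq_zero_of_orthogonal hint (hP.natDegree_sub_lt hN hQ) horth)
  have := hint ((P - Q) ^ 2)
  simp only [eval_pow] at this
  exact this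

end Orthogonality

lemma poch_succ (a : ℝ) (k : ℕ) : poch a (k + 1) = poch a k * (a + k) :=
  Finset.prod_range_succ _ _

section Jacobi

variable (α β : ℝ)

/-- For the Jacobi weight `w = t^β (1-t)^α`, `w · jacobiDeriv α β r = (w · t(1-t) · r)'`. -/
noncomputable def jacobiDeriv : ℝ[X] →ₗ[ℝ] ℝ[X] :=
  LinearMap.mulLeft ℝ (X * (1 - X)) ∘ₗ derivative +
    LinearMap.mulLeft ℝ (C (β + 1) - C (α + β + 2) * X)

lemma jacobiDeriv_apply (r : ℝ[X]) :
    jacobiDeriv α β r = X * (1 - X) * derivative r + (C (β + 1) - C (α + β + 2) * X) * r :=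
  rfl

lemma jacobiDeriv_mul (f g : ℝ[X]) :
    jacobiDeriv α β (f * g) = f * jacobiDeriv α β g + X * (1 - X) * derivative f * g := by
  simp only [jacobiDeriv_apply, derivative_mul]
  ring

lemma mul_jacobiDeriv_derivative_sub (p s : ℝ[X]) :
    s * jacobiDeriv α β (derivative p) - p * jacobiDeriv α β (derivative s) =
      jacobiDeriv α β (s * derivative p - p * derivative s) := by
  simp only [jacobiDeriv_apply, derivative_mul, derivative_sub]
  ring

noncomputable def jacobiEigenvalue (n : ℕ) : ℝ := n * (n + α + β + 1)

lemma jacobiDeriv_derivative_X_pow (j : ℕ) :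
    jacobiDeriv α β (derivative (X ^ j)) =
      C (j * (j + β)) * X ^ (j - 1) - C (jacobiEigenvalue α β j) * X ^ j := by
  rcases j with _ | _ | j
  · simp [jacobiDeriv_apply, jacobiEigenvalue]
  · simp only [zero_add, pow_one, derivative_X, jacobiDeriv_apply, derivative_one, mul_zero,
      map_add, map_one, map_ofNat, mul_one, Nat.cast_one, one_mul, tsub_self, pow_zero,
      jacobiEigenvalue]
    ring
  · simp only [jacobiDeriv_apply, jacobiEigenvalue, derivative_X_pow, derivative_C_mul,
      Nat.add_sub_cancel]
    simp only [map_mul, map_add, map_natCast, map_one, map_ofNat, pow_succ]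
    push_cast
    ring

noncomputable def jacobiCoeff (n k : ℕ) : ℝ :=
  poch (-n) k * poch (-n - β) k / (k.factorial * poch (-(2 * n) - α - β) k)

noncomputable def jacobiPoly (n : ℕ) : ℝ[X] :=
  ∑ k ∈ Finset.range (n + 1), C (jacobiCoeff α β n k) * X ^ (n - k)

lemma jacobiPoly_isMonicOfDegree (n : ℕ) : IsMonicOfDegree (jacobiPoly α β n) n := by
  refine (isMonicOfDegree_iff _ _).mpr ⟨natDegree_sum_le_of_forall_le _ _ fun k _ => ?_, ?_⟩
  · exact natDegree_C_mul_X_pow_le _ _ |>.trans (Nat.sub_le n k)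
  · rw [jacobiPoly, finsetSum_coeff, Finset.sum_eq_single 0]
    · simp [jacobiCoeff, poch]
    · intro k hk hk0
      rw [coeff_C_mul_X_pow, if_neg (by have := Finset.mem_range.mp hk; omega)]
    · simp

variable {α β}

lemma jacobiEigenvalue_lt (hαβ : -2 < α + β) {m n : ℕ} (h : m < n) :
    jacobiEigenvalue α β m < jacobiEigenvalue α β n := by
  have h' : (m : ℝ) + 1 ≤ n := by exact_mod_cast h
  have hm : (0 : ℝ) ≤ m := m.cast_nonneg
  unfold jacobiEigenvalue
  nlinarith

lemma jacobiCoeff_succ (hαβ : -2 < α + β) {n k : ℕ} (hk : k < n) :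
    jacobiCoeff α β n k * ((n - k) * (n - k + β)) +
      jacobiCoeff α β n (k + 1) * ((k + 1) * (2 * n - k + α + β)) = 0 := by
  have hlt : ∀ i ≤ k, -(2 * n : ℝ) - α - β + i < 0 := fun i hi => by
    have : (i : ℝ) + 1 ≤ n := by exact_mod_cast hi.trans_lt hk
    linarith
  have hpoch : poch (-(2 * n) - α - β) k ≠ 0 :=
    Finset.prod_ne_zero_iff.mpr fun i hi => (hlt i (Finset.mem_range.mp hi).le).ne
  have hlast := (hlt k le_rfl).ne
  simp only [jacobiCoeff, poch_succ, Nat.factorial_succ, Nat.cast_mul, Nat.cast_succ]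
  rw [div_mul_eq_mul_div, div_mul_eq_mul_div, div_add_div _ _ (by positivity) (by positivity),
    div_eq_zero_iff]
  left
  ring

lemma jacobiDeriv_derivative_jacobiPoly (hαβ : -2 < α + β) (n : ℕ) :
    jacobiDeriv α β (derivative (jacobiPoly α β n)) +
      C (jacobiEigenvalue α β n) * jacobiPoly α β n = 0 := by
  have hterm : ∀ k ∈ Finset.range (n + 1),
      jacobiDeriv α β (derivative (C (jacobiCoeff α β n k) * X ^ (n - k))) +
        C (jacobiEigenvalue α β n) * (C (jacobiCoeff α β n k) * X ^ (n - k)) =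
      C (jacobiCoeff α β n k * ((n - k) * (n - k + β))) * X ^ (n - k - 1) +
        C (jacobiCoeff α β n k * (k * (2 * n - k + α + β + 1))) * X ^ (n - k) := by
    intro k hk
    have hkn : ((n - k : ℕ) : ℝ) = n - k := Nat.cast_sub (Finset.mem_range_succ_iff.mp hk)
    simp only [derivative_C_mul, jacobiDeriv_mul, derivative_C, mul_zero, zero_mul, add_zero,
      jacobiDeriv_derivative_X_pow, jacobiEigenvalue, hkn, map_mul, map_add, map_sub,
      map_natCast, map_one, map_ofNat]
    ring
  -- the top term of the first sum and the bottom term of the second vanish; the rest pair up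
  rw [jacobiPoly, map_sum, map_sum, Finset.mul_sum, ← Finset.sum_add_distrib,
    Finset.sum_congr rfl hterm, Finset.sum_add_distrib, Finset.sum_range_succ,
    Finset.sum_range_succ']
  simp only [sub_self, zero_mul, mul_zero, Nat.cast_zero, map_zero, add_zero,
    ← Finset.sum_add_distrib]
  refine Finset.sum_eq_zero fun k hk => ?_
  rw [show n - (k + 1) = n - k - 1 by omega, ← add_mul, ← map_add]
  have hrec := jacobiCoeff_succ hαβ (Finset.mem_range.mp hk)
  push_cast
  rw [show jacobiCoeff α β n k * ((n - k) * (n - k + β)) +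
      jacobiCoeff α β n (k + 1) * ((k + 1) * (2 * n - (k + 1) + α + β + 1)) = 0 by
    linear_combination hrec, map_zero, zero_mul]

end Jacobi

noncomputable def ggWeight (α : ℝ) (q : ℕ) (x : ℝ) : ℝ := |x| ^ (2 * q + 2) * (1 - x ^ 2) ^ α

noncomputable def ggEvenIntegral (α : ℝ) (q : ℕ) (p : ℝ[X]) : ℝ :=
  ∫ x in (0 : ℝ)..1, ggWeight α q x * p.eval (x ^ 2)

lemma ggWeight_neg (α : ℝ) (q : ℕ) (x : ℝ) : ggWeight α q (-x) = ggWeight α q x := by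
  simp [ggWeight]

lemma ae_ggWeight_pos (α : ℝ) (q : ℕ) :
    ∀ᵐ x ∂volume.restrict (Set.Ioo (-1) 1), 0 < ggWeight α q x := by
  filter_upwards [ae_restrict_mem measurableSet_Ioo, ae_restrict_of_ae (volume.ae_ne 0)]
    with x hx hx0
  have : 0 < 1 - x ^ 2 := by nlinarith [hx.1, hx.2]
  unfold ggWeight
  positivity

lemma ggEvenIntegral_C_mul (α : ℝ) (q : ℕ) (c : ℝ) (p : ℝ[X]) :
    ggEvenIntegral α q (C c * p) = c * ggEvenIntegral α q p := by
  simp only [ggEvenIntegral, eval_mul, eval_C, mul_left_comm _ c,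
    intervalIntegral.integral_const_mul]

section Weight

variable {α : ℝ} (hα : -1 < α) (q : ℕ)
include hα

lemma intervalIntegrable_ggWeight_mul_zero_one {g : ℝ → ℝ} (hg : ContinuousOn g (Set.Icc 0 1)) :
    IntervalIntegrable (fun x => ggWeight α q x * g x) volume 0 1 := by
  have hsing : IntervalIntegrable (fun x : ℝ => (1 - x) ^ α) volume 0 1 := by
    simpa using (intervalIntegral.intervalIntegrable_rpow' (a := 1) (b := 0) hα).comp_sub_left 1
  have hcont : ContinuousOn (fun x : ℝ => |x| ^ (2 * q + 2) * (1 + x) ^ α * g x)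
      (Set.uIcc 0 1) := by
    rw [Set.uIcc_of_le zero_le_one]
    refine ContinuousOn.mul (ContinuousOn.mul (by fun_prop) fun x hx => ?_) hg
    exact (Real.continuousAt_rpow_const _ α (Or.inl (by linarith [hx.1]))).comp
      (by fun_prop) |>.continuousWithinAt
  refine (hsing.mul_continuousOn hcont).congr fun x hx => ?_
  rw [Set.uIoc_of_le zero_le_one] at hx
  have hfactor : (1 - x ^ 2) ^ α = (1 - x) ^ α * (1 + x) ^ α := by
    rw [← Real.mul_rpow (by linarith [hx.2]) (by linarith [hx.1])]
    ring_nf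
  simp only [ggWeight, hfactor]
  ring

lemma intervalIntegrable_ggWeight_mul {g : ℝ → ℝ} (hg : Continuous g) :
    IntervalIntegrable (fun x => ggWeight α q x * g x) volume (-1) 1 := by
  refine IntervalIntegrable.trans (b := 0) (intervalIntegrable_neg_zero_of_comp_neg ?_)
    (intervalIntegrable_ggWeight_mul_zero_one hα q hg.continuousOn)
  simpa only [ggWeight_neg] using
    intervalIntegrable_ggWeight_mul_zero_one hα q (g := fun x => g (-x)) (by fun_prop)

lemma intervalIntegrable_ggWeight_mul_eval_sq (p : ℝ[X]) :
    IntervalIntegrable (fun x => ggWeight α q x * p.eval (x ^ 2)) volume 0 1 :=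
  intervalIntegrable_ggWeight_mul_zero_one hα q (by fun_prop)

lemma ggEvenIntegral_sub (p r : ℝ[X]) :
    ggEvenIntegral α q (p - r) = ggEvenIntegral α q p - ggEvenIntegral α q r := by
  simp only [ggEvenIntegral, eval_sub, mul_sub]
  exact integral_sub (intervalIntegrable_ggWeight_mul_eval_sq hα q p)
    (intervalIntegrable_ggWeight_mul_eval_sq hα q r)

lemma ggEvenIntegral_jacobiDeriv (r : ℝ[X]) :
    ggEvenIntegral α q (jacobiDeriv α (q + 1 / 2) r) = 0 := by
  set F : ℝ → ℝ := fun x => x ^ (2 * q + 3) * (1 - x ^ 2) ^ (α + 1) * r.eval (x ^ 2)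
  have hF : ∀ x ∈ Set.Ioo (0 : ℝ) 1, HasDerivAt F
      (2 * (ggWeight α q x * (jacobiDeriv α (q + 1 / 2) r).eval (x ^ 2))) x := by
    intro x hx
    have hx2 : 1 - x ^ 2 ≠ 0 := by nlinarith [hx.1, hx.2]
    have h1 := hasDerivAt_pow (2 * q + 3) x
    have h2 := ((hasDerivAt_pow 2 x).const_sub 1).rpow_const (p := α + 1) (Or.inl hx2)
    have h3 := (r.hasDerivAt (x ^ 2)).comp x (hasDerivAt_pow 2 x)
    refine ((h1.mul h2).mul h3).congr_deriv ?_
    simp only [ggWeight, jacobiDeriv_apply, eval_add, eval_mul, eval_sub, eval_C, eval_X,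
      eval_one, abs_of_pos hx.1, add_sub_cancel_right, Real.rpow_add_one hx2, Pi.mul_apply,
      Function.comp_apply]
    push_cast
    ring
  have hcont : ContinuousOn F (Set.Icc 0 1) := by
    have h : Continuous fun x : ℝ => (1 - x ^ 2) ^ (α + 1) :=
      (by fun_prop : Continuous fun x : ℝ => 1 - x ^ 2).rpow_const fun _ => Or.inr (by linarith)
    exact (((continuous_pow _).mul h).mul (r.continuous.comp (continuous_pow 2))).continuousOn
  have hFTC := integral_eq_sub_of_hasDerivAt_of_le zero_le_one hcont hF
    ((intervalIntegrable_ggWeight_mul_eval_sq hα q (jacobiDeriv α (q + 1 / 2) r)).const_mul 2)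
  have hF1 : F 1 = 0 := by simp [F, Real.zero_rpow (by linarith : α + 1 ≠ 0)]
  have hF0 : F 0 = 0 := by simp [F]
  rw [intervalIntegral.integral_const_mul, hF1, hF0, sub_zero, mul_eq_zero] at hFTC
  exact hFTC.resolve_left two_ne_zero

lemma ggEvenIntegral_mul_jacobiDeriv_derivative_comm (p s : ℝ[X]) :
    ggEvenIntegral α q (s * jacobiDeriv α (q + 1 / 2) (derivative p)) =
      ggEvenIntegral α q (p * jacobiDeriv α (q + 1 / 2) (derivative s)) := by
  rw [← sub_eq_zero, ← ggEvenIntegral_sub hα, mul_jacobiDeriv_derivative_sub,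
    ggEvenIntegral_jacobiDeriv hα]

lemma ggEvenIntegral_X_pow_mul_recurrence {n : ℕ} {p : ℝ[X]}
    (hp : jacobiDeriv α (q + 1 / 2) (derivative p) +
      C (jacobiEigenvalue α (q + 1 / 2) n) * p = 0) (m : ℕ) :
    (jacobiEigenvalue α (q + 1 / 2) m - jacobiEigenvalue α (q + 1 / 2) n) *
        ggEvenIntegral α q (X ^ m * p) =
      m * (m + (q + 1 / 2)) * ggEvenIntegral α q (X ^ (m - 1) * p) := by
  have h := ggEvenIntegral_mul_jacobiDeriv_derivative_comm hα q p (X ^ m)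
  rw [eq_neg_of_add_eq_zero_left hp, jacobiDeriv_derivative_X_pow,
    show X ^ m * -(C (jacobiEigenvalue α (q + 1 / 2) n) * p) =
      C (-jacobiEigenvalue α (q + 1 / 2) n) * (X ^ m * p) by rw [map_neg]; ring,
    show p * (C ((m : ℝ) * (m + (q + 1 / 2))) * X ^ (m - 1) -
        C (jacobiEigenvalue α (q + 1 / 2) m) * X ^ m) =
      C ((m : ℝ) * (m + (q + 1 / 2))) * (X ^ (m - 1) * p) -
        C (jacobiEigenvalue α (q + 1 / 2) m) * (X ^ m * p) by ring,
    ggEvenIntegral_sub hα, ggEvenIntegral_C_mul, ggEvenIntegral_C_mul,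
    ggEvenIntegral_C_mul] at h
  linear_combination h

lemma ggEvenIntegral_X_pow_mul_eq_zero {n : ℕ} {p : ℝ[X]}
    (hp : jacobiDeriv α (q + 1 / 2) (derivative p) +
      C (jacobiEigenvalue α (q + 1 / 2) n) * p = 0) {m : ℕ} (hm : m < n) :
    ggEvenIntegral α q (X ^ m * p) = 0 := by
  have hαβ : -2 < α + (q + 1 / 2) := by linarith [q.cast_nonneg (α := ℝ)]
  suffices key : ∀ m < n,
      m * (m + (q + 1 / 2)) * ggEvenIntegral α q (X ^ (m - 1) * p) = 0 →
        ggEvenIntegral α q (X ^ m * p) = 0 by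
    induction m with
    | zero => exact key 0 hm (by simp)
    | succ m ih => exact key _ hm (by rw [Nat.add_sub_cancel, ih (by omega), mul_zero])
  intro m hm hrhs
  exact (mul_eq_zero.mp ((ggEvenIntegral_X_pow_mul_recurrence hα q hp m).trans hrhs)).resolve_left
    (sub_ne_zero.mpr (jacobiEigenvalue_lt hαβ hm).ne)

lemma integral_ggWeight_mul_X_pow_mul_eval_sq_eq_zero {n : ℕ} {p : ℝ[X]}
    (hp : jacobiDeriv α (q + 1 / 2) (derivative p) +
      C (jacobiEigenvalue α (q + 1 / 2) n) * p = 0) {k : ℕ} (hk : k < 2 * n) :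
    ∫ x in (-1 : ℝ)..1, ggWeight α q x * x ^ k * p.eval (x ^ 2) = 0 := by
  have hint : IntervalIntegrable (fun x => ggWeight α q x * x ^ k * p.eval (x ^ 2)) volume 0 1 := by
    simpa only [mul_assoc] using
      intervalIntegrable_ggWeight_mul_zero_one hα q (g := fun x => x ^ k * p.eval (x ^ 2))
        (by fun_prop)
  rcases Nat.even_or_odd' k with ⟨m, rfl | rfl⟩
  · rw [integral_neg_to_self_of_even (fun x => by simp [ggWeight_neg, pow_mul]) hint]
    have hhalf : ∫ x in (0 : ℝ)..1, ggWeight α q x * x ^ (2 * m) * p.eval (x ^ 2) =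
        ggEvenIntegral α q (X ^ m * p) := by
      simp only [ggEvenIntegral, eval_mul, eval_pow, eval_X, pow_mul, mul_assoc]
    rw [hhalf, ggEvenIntegral_X_pow_mul_eq_zero hα q hp (by omega), mul_zero]
  · exact integral_neg_to_self_of_odd (fun x => by simp [ggWeight_neg, pow_succ, pow_mul]) hint

end Weight

lemma Peven_eq_eval_jacobiPoly (α : ℝ) (q n : ℕ) (x : ℝ) :
    Peven α q n x = (jacobiPoly α (q + 1 / 2) n).eval (x ^ 2) := by
  simp only [Peven, jacobiPoly, jacobiCoeff, eval_finsetSum, eval_mul, eval_C, eval_pow, eval_X,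
    sub_add_eq_sub_sub]
  refine Finset.sum_congr rfl fun k _ => ?_
  rw [← pow_mul, show 2 * (n - k) = 2 * n - 2 * k by omega]

theorem gg_explicit_formula_general (α : ℝ) (hα : -1 < α) (q : ℕ) (n : ℕ)
    (G : Polynomial ℝ) (hGm : G.Monic) (hGd : G.natDegree = 2 * n)
    (hG : ∀ k : ℕ, k < 2 * n →
      ∫ x in (-1 : ℝ)..1, |x| ^ (2 * q + 2) * (1 - x ^ 2) ^ α * x ^ k * G.eval x = 0) :
    ∀ x : ℝ, G.eval x = Peven α q n x := by
  have hαβ : -2 < α + (q + 1 / 2) := by linarith [q.cast_nonneg (α := ℝ)]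
  have hp := jacobiDeriv_derivative_jacobiPoly hαβ n
  have hmonic : IsMonicOfDegree ((jacobiPoly α (q + 1 / 2) n).comp (X ^ 2)) (2 * n) := by
    simpa [mul_comm] using (jacobiPoly_isMonicOfDegree α (q + 1 / 2) n).comp two_ne_zero
      (isMonicOfDegree_X_pow (R := ℝ) 2)
  have hG_eq : G = (jacobiPoly α (q + 1 / 2) n).comp (X ^ 2) :=
    eq_of_isMonicOfDegree_of_orthogonal (w := ggWeight α q) (by norm_num) (ae_ggWeight_pos α q)
      (fun r => intervalIntegrable_ggWeight_mul hα q r.continuous) ⟨hGd, hGm⟩ hmonic hG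
      fun k hk => by
        simpa only [eval_comp, eval_pow, eval_X] using
          integral_ggWeight_mul_X_pow_mul_eval_sq_eq_zero hα q hp hk
  intro x
  rw [hG_eq, eval_comp, eval_pow, eval_X, Peven_eq_eval_jacobiPoly]

/-- The monic polynomial of degree `2n` orthogonal to lower powers with respect to the
generalized Gegenbauer weight `|x|^{2q+2}(1−x²)^α` is given by the explicit hypergeometric
sum `Peven α q n`. -/
theorem gg_explicit_formula (α : ℝ) (hα : -1 < α) (q : ℕ) (n : ℕ) (hn : 1 ≤ n)
    (G : Polynomial ℝ) (hGm : G.Monic) (hGd : G.natDegree = 2 * n)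
    (hG : ∀ k : ℕ, k < 2 * n →
      ∫ x in (-1 : ℝ)..1, |x| ^ (2 * q + 2) * (1 - x ^ 2) ^ α * x ^ k * G.eval x = 0) :
    ∀ x : ℝ, G.eval x = Peven α q n x :=
  gg_explicit_formula_general α hα q n G hGm hGd hG
end

section
/- Let α > −1, let q ≥ 0 and n ≥ 0 be integers. Then ∫_{−1}^{1} x^{2q+1}(1−x²)^α(1−x) · x · P_n^{α,q}(x)² dx = (−1)^{n+1} ∫_{−1}^{1} x^{2q+1}(1−x²)^α(1−x) · P_n^{α,q}(x)² dx, and the integral on the right-hand side is nonzero. In other words, the recurrence coefficient β_n^{α,q} of the sequence (P_n^{α,q}) equals (−1)^{n+1}. -/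
open MeasureTheory intervalIntegral Polynomial

lemma continuous_Peven (α : ℝ) (q n : ℕ) : Continuous (Peven α q n) := by
  unfold Peven
  exact continuous_finset_sum _ fun k _ => continuous_const.mul (continuous_pow _)

lemma Peven_neg (α : ℝ) (q n : ℕ) (x : ℝ) : Peven α q n (-x) = Peven α q n x := by
  unfold Peven
  refine Finset.sum_congr rfl fun k hk => ?_
  congr 1
  have h : Even (2*n - 2*k) := ⟨n - k, by omega⟩
  exact h.neg_pow x

lemma odd_integral_zero (f : ℝ → ℝ) (hf : ∀ x, f (-x) = - f x) :
    ∫ x in (-1:ℝ)..1, f x = 0 := by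
  have h1 : (∫ x in (-1:ℝ)..1, f (-x)) = ∫ x in (-1:ℝ)..1, f x := by
    simpa using intervalIntegral.integral_comp_neg (a := -1) (b := 1) f
  have h2 : (∫ x in (-1:ℝ)..1, f (-x)) = - ∫ x in (-1:ℝ)..1, f x := by
    simp only [hf]
    exact intervalIntegral.integral_neg
  linarith [h1.symm.trans h2]

lemma aux_rpow_bound (α t : ℝ) (h1 : 1 ≤ t) (h2 : t ≤ 2) : t ^ α ≤ max 1 (2 ^ α) := by
  rcases le_or_gt 0 α with h | h
  · exact le_max_of_le_right (Real.rpow_le_rpow (by linarith) h2 h)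
  · exact le_max_of_le_left (Real.rpow_le_one_of_one_le_of_nonpos h1 h.le)

lemma integrable_weight (α : ℝ) (hα : -1 < α) (g : ℝ → ℝ) (hg : Continuous g) :
    IntervalIntegrable (fun x => (1 - x^2) ^ α * g x) volume (-1) 1 := by
  -- dominating function
  obtain ⟨x₀, _, hM'⟩ := isCompact_Icc.exists_isMaxOn (⟨-1, by norm_num, by norm_num⟩ :
    Set.Nonempty (Set.Icc (-1:ℝ) 1)) hg.abs.continuousOn
  set M : ℝ := |g x₀| with hMdef
  have hM : ∀ x ∈ Set.Icc (-1:ℝ) 1, |g x| ≤ M := fun x hx => hM' hx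
  have hM0 : 0 ≤ M := abs_nonneg _
  set C : ℝ := max 1 (2 ^ α) with hCdef
  have hC0 : 0 ≤ C := le_trans zero_le_one (le_max_left _ _)
  have hint1 : IntervalIntegrable (fun x : ℝ => (1 + x) ^ α) volume (-1) 1 := by
    have := (intervalIntegrable_rpow' hα (a := (0:ℝ)) (b := 2)).comp_add_left 1
    norm_num at this
    exact this
  have hint2 : IntervalIntegrable (fun x : ℝ => (1 - x) ^ α) volume (-1) 1 := by
    have := (intervalIntegrable_rpow' hα (a := (0:ℝ)) (b := 2)).comp_sub_left 1
    norm_num at this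
    exact this.symm
  have hdom : IntervalIntegrable
      (fun x : ℝ => M * C * ((1 - x) ^ α + (1 + x) ^ α)) volume (-1) 1 :=
    (hint2.add hint1).const_mul (M * C)
  apply IntervalIntegrable.mono_fun' hdom
  · have : Measurable fun x : ℝ => (1 - x^2) ^ α * g x := by fun_prop
    exact this.aestronglyMeasurable.restrict
  · rw [Filter.EventuallyLE, ae_restrict_iff' measurableSet_uIoc]
    filter_upwards with x hx
    have hx' : x ∈ Set.Ioc (-1:ℝ) 1 := by
      rwa [Set.uIoc_of_le (by norm_num : (-1:ℝ) ≤ 1)] at hx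
    have hx1 : -1 < x := hx'.1
    have hx2 : x ≤ 1 := hx'.2
    have h1x : 0 ≤ 1 - x := by linarith
    have h1x' : 0 ≤ 1 + x := by linarith
    have hsq : (1:ℝ) - x^2 = (1-x) * (1+x) := by ring
    have hA : (0:ℝ) ≤ (1-x) ^ α := Real.rpow_nonneg h1x _
    have hB : (0:ℝ) ≤ (1+x) ^ α := Real.rpow_nonneg h1x' _
    have hGM : |g x| ≤ M := hM x ⟨hx1.le, hx2⟩
    have hG0 : 0 ≤ |g x| := abs_nonneg _
    have hnorm : ‖(1 - x^2) ^ α * g x‖ = (1-x) ^ α * (1+x) ^ α * |g x| := by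
      rw [norm_mul, Real.norm_eq_abs, Real.norm_eq_abs, hsq, Real.mul_rpow h1x h1x',
        abs_of_nonneg (mul_nonneg hA hB)]
    rw [hnorm]
    rcases le_or_gt x 0 with hx0 | hx0
    · have hAC : (1-x) ^ α ≤ C := aux_rpow_bound α _ (by linarith) (by linarith)
      nlinarith [mul_le_mul_of_nonneg_left (mul_le_mul hAC hGM hG0 hC0) hB, mul_nonneg hB (mul_nonneg hC0 hM0), mul_nonneg hA (mul_nonneg hC0 hM0)]
    · have hBC : (1+x) ^ α ≤ C := aux_rpow_bound α _ (by linarith) (by linarith)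
      nlinarith [mul_le_mul_of_nonneg_left (mul_le_mul hBC hGM hG0 hC0) hA, mul_nonneg hB (mul_nonneg hC0 hM0), mul_nonneg hA (mul_nonneg hC0 hM0)]

noncomputable def Qpoly (α : ℝ) (q n : ℕ) : Polynomial ℝ :=
  ∑ k ∈ Finset.range (n + 1),
    Polynomial.C (poch (-(n : ℝ)) k * poch (-(n : ℝ) - q - 1/2) k /
      ((Nat.factorial k : ℝ) * poch (-(2 * (n : ℝ)) - α - q - 1/2) k)) *
      Polynomial.X ^ (2*n - 2*k)

lemma Peven_eq_eval (α : ℝ) (q n : ℕ) (x : ℝ) : Peven α q n x = (Qpoly α q n).eval x := by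
  unfold Peven Qpoly
  simp [Polynomial.eval_finset_sum]

lemma Qpoly_ne_zero (α : ℝ) (q n : ℕ) : Qpoly α q n ≠ 0 := by
  intro h
  have hc : (Qpoly α q n).coeff (2*n) = 1 := by
    unfold Qpoly
    rw [Polynomial.finset_sum_coeff]
    rw [Finset.sum_eq_single 0]
    · simp [poch]
    · intro k hk hk0
      rw [Polynomial.coeff_C_mul, Polynomial.coeff_X_pow, if_neg (by
        simp only [Finset.mem_range] at hk; omega), mul_zero]
    · intro h0; exact absurd (Finset.mem_range.mpr (by omega)) h0
  rw [h] at hc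
  simp at hc

lemma Peven_zero_finite (α : ℝ) (q n : ℕ) : {x : ℝ | Peven α q n x = 0}.Finite := by
  apply Set.Finite.subset (Polynomial.finite_setOf_isRoot (Qpoly_ne_zero α q n))
  intro x hx
  simpa [Polynomial.IsRoot, ← Peven_eq_eval] using hx

lemma pos_integral (β : ℝ) (hβ : -1 < β) (q m : ℕ) :
    0 < ∫ x in (-1:ℝ)..1, (1 - x^2) ^ β * (x^(2*q+2) * (Peven β q m x)^2) := by
  have hcont : Continuous (fun x : ℝ => x^(2*q+2) * (Peven β q m x)^2) :=
    (continuous_pow _).mul ((continuous_Peven β q m).pow 2)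
  have hInt : IntervalIntegrable
      (fun x => (1 - x^2) ^ β * (x^(2*q+2) * (Peven β q m x)^2)) volume (-1) 1 :=
    integrable_weight β hβ _ hcont
  rw [intervalIntegral.integral_of_le (by norm_num : (-1:ℝ) ≤ 1)]
  rw [MeasureTheory.setIntegral_pos_iff_support_of_nonneg_ae]
  · -- support has positive measure
    set f := fun x : ℝ => (1 - x^2) ^ β * (x^(2*q+2) * (Peven β q m x)^2) with hf
    set S : Set ℝ := {x : ℝ | Peven β q m x = 0} ∪ {0} with hS
    have hSfin : S.Finite := (Peven_zero_finite β q m).union (Set.finite_singleton 0)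
    have hSzero : volume S = 0 := hSfin.measure_zero _
    have hsubset : Set.Ioo (-1:ℝ) 1 ⊆ (Function.support f ∩ Set.Ioc (-1) 1) ∪ S := by
      intro x hx
      by_cases hxS : x ∈ S
      · exact Or.inr hxS
      · left
        refine ⟨?_, hx.1, hx.2.le⟩
        simp only [hS, Set.mem_union, Set.mem_setOf_eq, Set.mem_singleton_iff,
          not_or] at hxS
        have h1 : (0:ℝ) < 1 - x^2 := by nlinarith [hx.1, hx.2]
        have h2 : (1 - x^2) ^ β ≠ 0 := ne_of_gt (Real.rpow_pos_of_pos h1 β)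
        have h3 : x^(2*q+2) ≠ 0 := pow_ne_zero _ hxS.2
        have h4 : (Peven β q m x)^2 ≠ 0 := pow_ne_zero _ hxS.1
        exact mul_ne_zero h2 (mul_ne_zero h3 h4)
    have h2le : volume (Set.Ioo (-1:ℝ) 1) ≤
        volume (Function.support f ∩ Set.Ioc (-1) 1) + volume S :=
      (measure_mono hsubset).trans (measure_union_le _ _)
    rw [hSzero, add_zero, Real.volume_Ioo] at h2le
    calc (0:ENNReal) < ENNReal.ofReal (1 - (-1)) := by norm_num
    _ ≤ _ := h2le
  · -- nonneg a.e.
    rw [Filter.EventuallyLE, ae_restrict_iff' measurableSet_Ioc]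
    filter_upwards with x hx
    have h1 : (0:ℝ) ≤ 1 - x^2 := by nlinarith [hx.1, hx.2]
    have : 2*q + 2 = 2*(q+1) := by omega
    rw [this, pow_mul]
    positivity
  · exact hInt.1

/-- The recurrence coefficient `β_n^{α,q}` equals `(−1)^{n+1}`: the first moment of
`(P_n^{α,q})²` with respect to the signed weight equals `(−1)^{n+1}` times its (nonzero)
zeroth moment. -/
theorem beta_recurrence_coefficient (α : ℝ) (hα : -1 < α) (q n : ℕ) :
    (∫ x in (-1 : ℝ)..1,
        x ^ (2 * q + 1) * (1 - x ^ 2) ^ α * (1 - x) * x * (P α q n x) ^ 2)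
      = (-1 : ℝ) ^ (n + 1) *
          ∫ x in (-1 : ℝ)..1,
            x ^ (2 * q + 1) * (1 - x ^ 2) ^ α * (1 - x) * (P α q n x) ^ 2 ∧
    (∫ x in (-1 : ℝ)..1,
        x ^ (2 * q + 1) * (1 - x ^ 2) ^ α * (1 - x) * (P α q n x) ^ 2) ≠ 0 := by
  rcases Nat.even_or_odd n with hn | hn
  · -- n even
    set m := n / 2 with hm
    have hP : ∀ x : ℝ, P α q n x = Peven α q m x := fun x => if_pos hn
    have hEneg := Peven_neg α q m
    have hEcont := continuous_Peven α q m
    have hc : ∀ j : ℕ, Continuous (fun x : ℝ => x ^ j * (Peven α q m x) ^ 2) :=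
      fun j => (continuous_pow j).mul (hEcont.pow 2)
    have i1 := integrable_weight α hα _ (hc (2*q+1))
    have i2 := integrable_weight α hα _ (hc (2*q+2))
    have i3 := integrable_weight α hα _ (hc (2*q+3))
    have z1 : (∫ x in (-1:ℝ)..1, (1 - x^2) ^ α * (x ^ (2*q+1) * (Peven α q m x) ^ 2)) = 0 := by
      apply odd_integral_zero
      intro x
      have h1 : ((1:ℝ) - (-x)^2) = 1 - x^2 := by ring
      have h2 : (-x) ^ (2*q+1) = -(x ^ (2*q+1)) := Odd.neg_pow ⟨q, by ring⟩ x
      rw [h1, hEneg, h2]; ring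
    have z3 : (∫ x in (-1:ℝ)..1, (1 - x^2) ^ α * (x ^ (2*q+3) * (Peven α q m x) ^ 2)) = 0 := by
      apply odd_integral_zero
      intro x
      have h1 : ((1:ℝ) - (-x)^2) = 1 - x^2 := by ring
      have h2 : (-x) ^ (2*q+3) = -(x ^ (2*q+3)) := Odd.neg_pow ⟨q+1, by ring⟩ x
      rw [h1, hEneg, h2]; ring
    have key0 : ∀ x : ℝ, x ^ (2 * q + 1) * (1 - x ^ 2) ^ α * (1 - x) * (P α q n x) ^ 2
        = (1 - x^2) ^ α * (x ^ (2*q+1) * (Peven α q m x) ^ 2)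
          - (1 - x^2) ^ α * (x ^ (2*q+2) * (Peven α q m x) ^ 2) := by
      intro x
      rw [hP x]
      set A := ((1:ℝ) - x^2) ^ α with hA
      ring
    have key1 : ∀ x : ℝ, x ^ (2 * q + 1) * (1 - x ^ 2) ^ α * (1 - x) * x * (P α q n x) ^ 2
        = (1 - x^2) ^ α * (x ^ (2*q+2) * (Peven α q m x) ^ 2)
          - (1 - x^2) ^ α * (x ^ (2*q+3) * (Peven α q m x) ^ 2) := by
      intro x
      rw [hP x]
      set A := ((1:ℝ) - x^2) ^ α with hA
      ring
    have e0 : (∫ x in (-1:ℝ)..1,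
        x ^ (2 * q + 1) * (1 - x ^ 2) ^ α * (1 - x) * (P α q n x) ^ 2)
        = - ∫ x in (-1:ℝ)..1, (1 - x^2) ^ α * (x ^ (2*q+2) * (Peven α q m x) ^ 2) := by
      simp only [key0]
      rw [intervalIntegral.integral_sub i1 i2, z1]
      ring
    have e1 : (∫ x in (-1:ℝ)..1,
        x ^ (2 * q + 1) * (1 - x ^ 2) ^ α * (1 - x) * x * (P α q n x) ^ 2)
        = ∫ x in (-1:ℝ)..1, (1 - x^2) ^ α * (x ^ (2*q+2) * (Peven α q m x) ^ 2) := by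
      simp only [key1]
      rw [intervalIntegral.integral_sub i2 i3, z3]
      ring
    have hpos := pos_integral α hα q m
    constructor
    · rw [e1, e0, (Even.add_one hn).neg_one_pow]
      ring
    · rw [e0]
      exact neg_ne_zero.mpr (ne_of_gt hpos)
  · -- n odd
    have hne : ¬ Even n := by
      rcases hn with ⟨r, rfl⟩
      intro h; rcases h with ⟨s, hs⟩; omega
    have hβ : (-1:ℝ) < α + 1 := by linarith
    set m := n / 2 with hm
    have hP : ∀ x : ℝ, P α q n x = (1 + x) * Peven (α+1) q m x := fun x => if_neg hne
    have hEneg := Peven_neg (α+1) q m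
    have hEcont := continuous_Peven (α+1) q m
    have hc : ∀ j : ℕ, Continuous (fun x : ℝ => x ^ j * (Peven (α+1) q m x) ^ 2) :=
      fun j => (continuous_pow j).mul (hEcont.pow 2)
    have i1 := integrable_weight (α+1) hβ _ (hc (2*q+1))
    have i2 := integrable_weight (α+1) hβ _ (hc (2*q+2))
    have i3 := integrable_weight (α+1) hβ _ (hc (2*q+3))
    have z1 : (∫ x in (-1:ℝ)..1, (1 - x^2) ^ (α+1) * (x ^ (2*q+1) * (Peven (α+1) q m x) ^ 2)) = 0 := by
      apply odd_integral_zero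
      intro x
      have h1 : ((1:ℝ) - (-x)^2) = 1 - x^2 := by ring
      have h2 : (-x) ^ (2*q+1) = -(x ^ (2*q+1)) := Odd.neg_pow ⟨q, by ring⟩ x
      rw [h1, hEneg, h2]; ring
    have z3 : (∫ x in (-1:ℝ)..1, (1 - x^2) ^ (α+1) * (x ^ (2*q+3) * (Peven (α+1) q m x) ^ 2)) = 0 := by
      apply odd_integral_zero
      intro x
      have h1 : ((1:ℝ) - (-x)^2) = 1 - x^2 := by ring
      have h2 : (-x) ^ (2*q+3) = -(x ^ (2*q+3)) := Odd.neg_pow ⟨q+1, by ring⟩ x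
      rw [h1, hEneg, h2]; ring
    have hr : ∀ x : ℝ, ((1:ℝ) - x^2) ^ (α+1) = (1 - x^2) ^ α * (1 - x^2) := by
      intro x
      rcases eq_or_ne ((1:ℝ) - x^2) 0 with h0 | h0
      · rw [h0, Real.zero_rpow (by linarith : α + 1 ≠ 0), mul_zero]
      · exact Real.rpow_add_one h0 α
    have key0 : ∀ x : ℝ, x ^ (2 * q + 1) * (1 - x ^ 2) ^ α * (1 - x) * (P α q n x) ^ 2
        = (1 - x^2) ^ (α+1) * (x ^ (2*q+1) * (Peven (α+1) q m x) ^ 2)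
          + (1 - x^2) ^ (α+1) * (x ^ (2*q+2) * (Peven (α+1) q m x) ^ 2) := by
      intro x
      rw [hP x, hr x]
      set A := ((1:ℝ) - x^2) ^ α with hA
      ring
    have key1 : ∀ x : ℝ, x ^ (2 * q + 1) * (1 - x ^ 2) ^ α * (1 - x) * x * (P α q n x) ^ 2
        = (1 - x^2) ^ (α+1) * (x ^ (2*q+2) * (Peven (α+1) q m x) ^ 2)
          + (1 - x^2) ^ (α+1) * (x ^ (2*q+3) * (Peven (α+1) q m x) ^ 2) := by
      intro x
      rw [hP x, hr x]
      set A := ((1:ℝ) - x^2) ^ α with hA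
      ring
    have e0 : (∫ x in (-1:ℝ)..1,
        x ^ (2 * q + 1) * (1 - x ^ 2) ^ α * (1 - x) * (P α q n x) ^ 2)
        = ∫ x in (-1:ℝ)..1, (1 - x^2) ^ (α+1) * (x ^ (2*q+2) * (Peven (α+1) q m x) ^ 2) := by
      simp only [key0]
      rw [intervalIntegral.integral_add i1 i2, z1]
      ring
    have e1 : (∫ x in (-1:ℝ)..1,
        x ^ (2 * q + 1) * (1 - x ^ 2) ^ α * (1 - x) * x * (P α q n x) ^ 2)
        = ∫ x in (-1:ℝ)..1, (1 - x^2) ^ (α+1) * (x ^ (2*q+2) * (Peven (α+1) q m x) ^ 2) := by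
      simp only [key1]
      rw [intervalIntegral.integral_add i2 i3, z3]
      ring
    have hpos := pos_integral (α+1) hβ q m
    constructor
    · rw [e1, e0, (Odd.add_one hn).neg_one_pow, one_mul]
    · rw [e0]
      exact ne_of_gt hpos
end

section
/- Let α > −1, let q ≥ 0 be an integer, and let n ≥ 1 be an integer. Then for every real x, P_{2n}^{α,q}(x) − P_{2n}^{α+1,q}(x) = γ_{2n}^{α,q} · P_{2n−2}^{α+1,q}(x), where γ_{2n}^{α,q} = −2 n (2n+2q+1) / [(4n+2α+2q+1)(4n+2α+2q+3)]. -/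
open MeasureTheory intervalIntegral Polynomial

lemma poch_succ_left (a : ℝ) (k : ℕ) : poch a (k + 1) = a * poch (a + 1) k := by
  rw [poch, Finset.prod_range_succ', mul_comm, poch]
  simp only [Nat.cast_zero, add_zero, Nat.cast_succ, add_assoc, add_comm (1 : ℝ)]

lemma poch_ne_zero_of_add_lt_one {a : ℝ} {k : ℕ} (h : a + k < 1) : poch a k ≠ 0 :=
  Finset.prod_ne_zero_iff.mpr fun i hi => by
    have : (i : ℝ) + 1 ≤ k := by exact_mod_cast Finset.mem_range.mp hi
    exact (show a + i < 0 by linarith).ne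

/-- The coefficient of `x^k` in the hypergeometric series `₂F₁(a, c; b; x)`. -/
noncomputable def hypCoeff (a c b : ℝ) (k : ℕ) : ℝ :=
  poch a k * poch c k / ((Nat.factorial k : ℝ) * poch b k)

lemma hypCoeff_zero (a c b : ℝ) : hypCoeff a c b 0 = 1 := by
  simp [hypCoeff, poch]

lemma hypCoeff_succ_sub_hypCoeff_sub_one (a c b : ℝ) (k : ℕ) (hb : poch (b - 1) (k + 2) ≠ 0) :
    hypCoeff a c b (k + 1) - hypCoeff a c (b - 1) (k + 1)
      = -(a * c) / (b * (b - 1)) * hypCoeff (a + 1) (c + 1) (b + 1) k := by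
  rw [poch_succ_left, sub_add_cancel, poch_succ_left] at hb
  have hb₁ : b - 1 ≠ 0 := left_ne_zero_of_mul hb
  have hb₀ : b ≠ 0 := left_ne_zero_of_mul (right_ne_zero_of_mul hb)
  have hP : poch (b + 1) k ≠ 0 := right_ne_zero_of_mul (right_ne_zero_of_mul hb)
  have hrel : poch b k * (b + k) = b * poch (b + 1) k := by rw [← poch_succ, poch_succ_left]
  have hQ : poch b k ≠ 0 := by
    intro h; rw [h, zero_mul] at hrel; exact mul_ne_zero hb₀ hP hrel.symm
  have hF : (Nat.factorial k : ℝ) ≠ 0 := by positivity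
  simp only [hypCoeff, poch_succ_left a, poch_succ_left c, poch_succ_left b,
    poch_succ_left (b - 1), sub_add_cancel, Nat.factorial_succ, Nat.cast_mul, Nat.cast_succ]
  field_simp
  linear_combination a * poch (a + 1) k * c * poch (c + 1) k * hrel

lemma Peven_eq_sum_hypCoeff (α : ℝ) (q n : ℕ) (x : ℝ) :
    Peven α q n x = ∑ k ∈ Finset.range (n + 1),
      hypCoeff (-(n : ℝ)) (-(n : ℝ) - q - 1/2) (-(2 * (n : ℝ)) - α - q - 1/2) k
        * x ^ (2*n - 2*k) :=
  rfl

lemma Peven_coeff_succ_sub {α : ℝ} (hα : -1 < α) (q : ℕ) {m k : ℕ} (hk : k ≤ m) :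
    hypCoeff (-((m : ℝ) + 1)) (-((m : ℝ) + 1) - q - 1/2)
        (-(2 * ((m : ℝ) + 1)) - α - q - 1/2) (k + 1)
      - hypCoeff (-((m : ℝ) + 1)) (-((m : ℝ) + 1) - q - 1/2)
        (-(2 * ((m : ℝ) + 1)) - (α + 1) - q - 1/2) (k + 1)
      = -2 * ((m : ℝ) + 1) * (2 * ((m : ℝ) + 1) + 2 * q + 1) /
          ((4 * ((m : ℝ) + 1) + 2 * α + 2 * q + 1) * (4 * ((m : ℝ) + 1) + 2 * α + 2 * q + 3))
        * hypCoeff (-(m : ℝ)) (-(m : ℝ) - q - 1/2)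
            (-(2 * (m : ℝ)) - (α + 1) - q - 1/2) k := by
  have hq : (0 : ℝ) ≤ q := q.cast_nonneg
  have hkm : (k : ℝ) ≤ m := by exact_mod_cast hk
  set b : ℝ := -(2 * ((m : ℝ) + 1)) - α - q - 1/2 with hb
  have hb₀ : b ≠ 0 := by linarith
  have hb₁ : b - 1 ≠ 0 := by linarith
  have hpoch : poch (b - 1) (k + 2) ≠ 0 := poch_ne_zero_of_add_lt_one (by push_cast; linarith)
  rw [show -(2 * ((m : ℝ) + 1)) - (α + 1) - q - 1/2 = b - 1 by ring,
    show -(2 * (m : ℝ)) - (α + 1) - q - 1/2 = b + 1 by ring,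
    hypCoeff_succ_sub_hypCoeff_sub_one _ _ _ _ hpoch]
  congr 1
  · rw [hb] at hb₀ hb₁ ⊢
    field_simp
    ring
  · congr 1 <;> ring

theorem gamma_even_relation_general (α : ℝ) (hα : -1 < α) (q : ℕ) (n : ℕ) :
    ∀ x : ℝ,
      Peven α q n x - Peven (α + 1) q n x
        = (-2 * (n : ℝ) * (2 * (n : ℝ) + 2 * q + 1) /
              ((4 * (n : ℝ) + 2 * α + 2 * q + 1) * (4 * (n : ℝ) + 2 * α + 2 * q + 3))) *
            Peven (α + 1) q (n - 1) x := by
  intro x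
  rcases n with _ | m
  · simp [Peven, poch]
  simp only [Peven_eq_sum_hypCoeff, Nat.add_sub_cancel, Nat.cast_succ]
  rw [← Finset.sum_sub_distrib, Finset.sum_range_succ', Finset.mul_sum]
  simp only [hypCoeff_zero, sub_self, add_zero]
  refine Finset.sum_congr rfl fun k hk => ?_
  rw [show 2 * (m + 1) - 2 * (k + 1) = 2 * m - 2 * k by omega, ← sub_mul,
    Peven_coeff_succ_sub hα q (Nat.lt_succ_iff.mp (Finset.mem_range.mp hk)), mul_assoc]

/-- `P_{2n}^{α,q}(x) − P_{2n}^{α+1,q}(x) = γ_{2n}^{α,q} P_{2n−2}^{α+1,q}(x)` with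
`γ_{2n}^{α,q} = −2n(2n+2q+1)/((4n+2α+2q+1)(4n+2α+2q+3))`. -/
theorem gamma_even_relation (α : ℝ) (hα : -1 < α) (q : ℕ) (n : ℕ) (hn : 1 ≤ n) :
    ∀ x : ℝ,
      Peven α q n x - Peven (α + 1) q n x
        = (-2 * (n : ℝ) * (2 * (n : ℝ) + 2 * q + 1) /
              ((4 * (n : ℝ) + 2 * α + 2 * q + 1) * (4 * (n : ℝ) + 2 * α + 2 * q + 3))) *
            Peven (α + 1) q (n - 1) x :=
  gamma_even_relation_general α hα q n
end

section
/- Let α > −1, let q ≥ 0 be an integer, and let n ≥ 1 be an integer. Then P_{2n}^{α,q} has 2n distinct real zeros x_1 < x_2 < ⋯ < x_{2n} and P_{2n+1}^{α,q} has 2n+1 distinct real zeros y_1 < y_2 < ⋯ < y_{2n+1}, and these zeros do NOT interlace: it is not the case that y_k < x_k < y_{k+1} holds for every 1 ≤ k ≤ 2n. -/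
open MeasureTheory intervalIntegral Polynomial

/-!
Put `A = n + q + 1/2` and `B = n + α`. Then `P_{2n}^{α,q}(x) = p(x²)` for a monic polynomial `p`
of degree `n`, and by Rodrigues' formula `u^(A-n) (1-u)^(B-n) p(u)` is a nonzero multiple of the
`n`-th derivative of `u^A (1-u)^B`. All lower derivatives of this function tend to `0` at both ends
of `(0, 1)`, so applying Rolle's theorem `n` times gives `p` exactly `n` zeros there, all positive.
Hence the zeros `x_1 < ⋯ < x_{2n}` of `P_{2n}^{α,q}` are the numbers `±√t` for the zeros `t` of
`p`, so `x_{2n+1-k} = -x_k`; likewise the zeros of `P_{2n+1}^{α,q} = (1+x) P_{2n}^{α+1,q}` are `y_1 = -1`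
and `y_2 < ⋯ < y_{2n+1}` with `y_{2n+2-k} = -y_{k+1}`. Interlacing would give `x_k < y_{k+1}` for
every `k`, and at `2n+1-k` this becomes `y_{k+1} < x_k`.
-/

open Set Filter Topology

theorem poch_neg (a : ℝ) (k : ℕ) : poch (-a) k = (-1) ^ k * (descPochhammer ℝ k).eval a := by
  rw [poch, descPochhammer_eval_eq_prod_range, ← Finset.card_range k, ← Finset.prod_const,
    Finset.card_range, ← Finset.prod_mul_distrib]
  exact Finset.prod_congr rfl fun i _ => by ring

theorem descPochhammer_add_eval {R : Type*} [CommRing R] (a : R) (k m : ℕ) :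
    (descPochhammer R (k + m)).eval a =
      (descPochhammer R k).eval a * (descPochhammer R m).eval (a - k) := by
  rw [← descPochhammer_mul, eval_mul, eval_comp]
  simp

theorem descPochhammer_eval_add {R : Type*} [CommRing R] (x y : R) (N : ℕ) :
    (descPochhammer R N).eval (x + y) = ∑ m ∈ Finset.range (N + 1),
      N.choose m * ((descPochhammer R m).eval x * (descPochhammer R (N - m)).eval y) := by
  have hsmeval (z : R) (k : ℕ) :
      (descPochhammer ℤ k).smeval z = (descPochhammer R k).eval z := by
    rw [← aeval_eq_smeval, aeval_def, ← eval_map, descPochhammer_map]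
  simpa only [hsmeval, Finset.Nat.sum_antidiagonal_eq_sum_range_succ_mk] using
    Ring.descPochhammer_smeval_add (r := x) (s := y) N (Commute.all x y)

theorem sum_choose_mul_choose_mul_descPochhammer {R : Type*} [CommRing R] (A B : R) {n k : ℕ}
    (hk : k ≤ n) :
    ∑ j ∈ Finset.range (n + 1), (n.choose j * j.choose k : R) *
        ((descPochhammer R j).eval A * (descPochhammer R (n - j)).eval B) =
      n.choose k * (descPochhammer R k).eval A * (descPochhammer R (n - k)).eval (A + B - k) := by
  rw [show n + 1 = k + (n - k + 1) by omega, Finset.sum_range_add,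
    Finset.sum_eq_zero fun j hj => by
      rw [Nat.choose_eq_zero_of_lt (Finset.mem_range.1 hj)]; simp,
    zero_add, show A + B - k = (A - k) + B by ring, descPochhammer_eval_add, Finset.mul_sum]
  refine Finset.sum_congr rfl fun m hm => ?_
  have hm : m ≤ n - k := Finset.mem_range_succ_iff.1 hm
  have hchoose : n.choose (k + m) * (k + m).choose k = n.choose k * (n - k).choose m := by
    rw [Nat.choose_mul (by omega), Nat.add_sub_cancel_left]
  rw [← Nat.cast_mul, hchoose, descPochhammer_add_eval,
    show n - (k + m) = n - k - m by omega]
  push_cast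
  ring

theorem neg_pow_mul_one_sub_pow {R : Type*} [CommRing R] (u : R) {i n : ℕ} (hi : i ≤ n) :
    (-u) ^ (n - i) * (1 - u) ^ i =
      ∑ k ∈ Finset.range (n + 1), (i.choose k : R) * (-u) ^ (n - k) := by
  rw [← Finset.sum_subset (Finset.range_subset_range.2 (by omega : i + 1 ≤ n + 1))
      fun k _ hk => by rw [Nat.choose_eq_zero_of_lt (by simpa using hk), Nat.cast_zero, zero_mul],
    sub_eq_add_neg (1 : R), add_pow, Finset.mul_sum]
  refine Finset.sum_congr rfl fun k hk => ?_
  rw [one_pow, one_mul, ← mul_assoc, ← pow_add, mul_comm,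
    show n - i + (i - k) = n - k by have := Finset.mem_range.1 hk; omega]

noncomputable def hypergeomCoeff (A B : ℝ) (n k : ℕ) : ℝ :=
  poch (-(n : ℝ)) k * poch (-A) k / ((k.factorial : ℝ) * poch (-(A + B)) k)

/-- `u ^ n ₂F₁(-n, -A; -A-B; 1/u)`, a monic Jacobi polynomial in `u` on `[0, 1]`. -/
noncomputable def hypergeomPoly (A B : ℝ) (n : ℕ) : ℝ[X] :=
  ∑ k ∈ Finset.range (n + 1), C (hypergeomCoeff A B n k) * X ^ (n - k)

theorem Peven_eq_eval_hypergeomPoly (α : ℝ) (q n : ℕ) (x : ℝ) :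
    Peven α q n x = (hypergeomPoly (q + 1 / 2 + n) (α + n) n).eval (x ^ 2) := by
  simp only [Peven, hypergeomPoly, hypergeomCoeff, eval_finsetSum, eval_mul, eval_C, eval_pow,
    eval_X, ← pow_mul]
  refine Finset.sum_congr rfl fun k _ => ?_
  rw [Nat.mul_sub]
  ring_nf

theorem natDegree_hypergeomPoly_le (A B : ℝ) (n : ℕ) : (hypergeomPoly A B n).natDegree ≤ n :=
  natDegree_sum_le_of_forall_le _ _ fun k _ =>
    (natDegree_C_mul_X_pow_le _ _).trans (Nat.sub_le n k)

theorem coeff_hypergeomPoly_self (A B : ℝ) (n : ℕ) : (hypergeomPoly A B n).coeff n = 1 := by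
  rw [hypergeomPoly, finsetSum_coeff, Finset.sum_eq_single 0]
  · simp [hypergeomCoeff, poch]
  · intro k hk hk0
    rw [coeff_C_mul_X_pow, if_neg (by have := Finset.mem_range.1 hk; omega)]
  · simp

theorem neg_one_pow_mul_descPochhammer_mul_hypergeomCoeff {A B : ℝ} {n k : ℕ} (hk : k ≤ n)
    (hAB : (descPochhammer ℝ n).eval (A + B) ≠ 0) :
    (-1) ^ n * (descPochhammer ℝ n).eval (A + B) * hypergeomCoeff A B n k =
      (-1) ^ (n - k) * (n.choose k * (descPochhammer ℝ k).eval A *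
        (descPochhammer ℝ (n - k)).eval (A + B - k)) := by
  obtain ⟨m, rfl⟩ := Nat.exists_eq_add_of_le hk
  rw [descPochhammer_add_eval] at hAB ⊢
  have hk0 : (descPochhammer ℝ k).eval (A + B) ≠ 0 := left_ne_zero_of_mul hAB
  rw [hypergeomCoeff, poch_neg, poch_neg, poch_neg, descPochhammer_eval_eq_descFactorial,
    Nat.descFactorial_eq_factorial_mul_choose, Nat.add_sub_cancel_left]
  have hsq : ((-1 : ℝ) ^ k) * (-1) ^ k = 1 := by rw [← mul_pow]; norm_num
  field_simp
  push_cast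
  linear_combination (-1) ^ m * (descPochhammer ℝ m).eval (A + B - k) * (k.factorial : ℝ) *
    ((k + m).choose k) * (descPochhammer ℝ k).eval A * hsq

theorem sum_leibniz_eq_eval_hypergeomPoly {A B : ℝ} {n : ℕ}
    (hAB : (descPochhammer ℝ n).eval (A + B) ≠ 0) (u : ℝ) :
    ∑ i ∈ Finset.range (n + 1), (n.choose i : ℝ) *
        ((descPochhammer ℝ i).eval A * (descPochhammer ℝ (n - i)).eval B) *
        ((-u) ^ (n - i) * (1 - u) ^ i) =
      (-1) ^ n * (descPochhammer ℝ n).eval (A + B) * (hypergeomPoly A B n).eval u := by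
  calc _ = ∑ k ∈ Finset.range (n + 1), (-u) ^ (n - k) * ∑ i ∈ Finset.range (n + 1),
        (n.choose i * i.choose k : ℝ) *
          ((descPochhammer ℝ i).eval A * (descPochhammer ℝ (n - i)).eval B) := by
        simp_rw [Finset.mul_sum]
        rw [Finset.sum_comm]
        refine Finset.sum_congr rfl fun i hi => ?_
        rw [neg_pow_mul_one_sub_pow u (Finset.mem_range_succ_iff.1 hi), Finset.mul_sum]
        exact Finset.sum_congr rfl fun k _ => by ring
    _ = ∑ k ∈ Finset.range (n + 1), (-u) ^ (n - k) * (n.choose k *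
          (descPochhammer ℝ k).eval A * (descPochhammer ℝ (n - k)).eval (A + B - k)) :=
        Finset.sum_congr rfl fun k hk => by
          rw [sum_choose_mul_choose_mul_descPochhammer A B (Finset.mem_range_succ_iff.1 hk)]
    _ = _ := by
        simp only [hypergeomPoly, eval_finsetSum, eval_mul, eval_C, eval_pow, eval_X,
          Finset.mul_sum]
        refine Finset.sum_congr rfl fun k hk => ?_
        rw [← mul_assoc _ _ (u ^ (n - k)), neg_one_pow_mul_descPochhammer_mul_hypergeomCoeff
          (Finset.mem_range_succ_iff.1 hk) hAB, neg_pow]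
        ring

theorem ContDiffOn.hasDerivAt_iteratedDeriv {𝕜 F : Type*} [NontriviallyNormedField 𝕜]
    [NormedAddCommGroup F] [NormedSpace 𝕜 F] {f : 𝕜 → F} {s : Set 𝕜} {x : 𝕜} {j : ℕ}
    (hf : ContDiffOn 𝕜 (j + 1) f s) (hs : IsOpen s) (hx : x ∈ s) :
    HasDerivAt (iteratedDeriv j f) (iteratedDeriv (j + 1) f x) x := by
  have hwithin : iteratedDerivWithin j f s =ᶠ[𝓝 x] iteratedDeriv j f :=
    Filter.eventuallyEq_of_mem (hs.mem_nhds hx) fun y hy => iteratedDerivWithin_of_isOpen hs hy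
  have hd : DifferentiableAt 𝕜 (iteratedDeriv j f) x :=
    ((hf.differentiableOn_iteratedDerivWithin (m := j) (by norm_cast; omega) hs.uniqueDiffOn x hx
      ).differentiableAt (hs.mem_nhds hx)).congr_of_eventuallyEq hwithin.symm
  rw [iteratedDeriv_succ]
  exact hd.hasDerivAt

theorem iteratedDeriv_rpow_const (r x : ℝ) (k : ℕ) :
    iteratedDeriv k (fun x : ℝ => x ^ r) x = (descPochhammer ℝ k).eval r * x ^ (r - k) := by
  rw [iteratedDeriv_eq_iterate]
  exact Real.iter_deriv_rpow_const r x k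

theorem iteratedDeriv_one_sub_rpow_const (r x : ℝ) (k : ℕ) :
    iteratedDeriv k (fun x : ℝ => (1 - x) ^ r) x =
      (-1) ^ k * (descPochhammer ℝ k).eval r * (1 - x) ^ (r - k) := by
  simp only [iteratedDeriv_comp_const_sub k (fun x : ℝ => x ^ r), smul_eq_mul,
    iteratedDeriv_rpow_const, mul_assoc]

theorem contDiffAt_one_sub_rpow_const {r u : ℝ} (hu : u ≠ 1) {n : WithTop ℕ∞} :
    ContDiffAt ℝ n (fun u : ℝ => (1 - u) ^ r) u :=
  (Real.contDiffAt_rpow_const_of_ne (sub_ne_zero.2 hu.symm)).comp u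
    (contDiffAt_const.sub contDiffAt_id)

theorem contDiffOn_rpow_mul_one_sub_rpow (A B : ℝ) {n : WithTop ℕ∞} :
    ContDiffOn ℝ n (fun u : ℝ => u ^ A * (1 - u) ^ B) (Ioo 0 1) := fun _ hu =>
  ((Real.contDiffAt_rpow_const_of_ne hu.1.ne').mul
    (contDiffAt_one_sub_rpow_const hu.2.ne)).contDiffWithinAt

theorem iteratedDeriv_rpow_mul_one_sub_rpow {A B u : ℝ} (hu : u ∈ Ioo (0 : ℝ) 1) (n : ℕ) :
    iteratedDeriv n (fun u : ℝ => u ^ A * (1 - u) ^ B) u =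
      ∑ i ∈ Finset.range (n + 1),
        (n.choose i : ℝ) * ((descPochhammer ℝ i).eval A * u ^ (A - i)) * ((-1) ^ (n - i) *
          (descPochhammer ℝ (n - i)).eval B * (1 - u) ^ (B - (n - i : ℕ))) := by
  rw [iteratedDeriv_fun_mul (Real.contDiffAt_rpow_const_of_ne hu.1.ne')
    (contDiffAt_one_sub_rpow_const hu.2.ne)]
  simp only [iteratedDeriv_rpow_const, iteratedDeriv_one_sub_rpow_const]

/-- Rodrigues' formula. -/
theorem iteratedDeriv_rpow_mul_one_sub_rpow_eq_hypergeomPoly {A B u : ℝ}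
    (hu : u ∈ Ioo (0 : ℝ) 1) {n : ℕ} (hAB : (descPochhammer ℝ n).eval (A + B) ≠ 0) :
    iteratedDeriv n (fun u : ℝ => u ^ A * (1 - u) ^ B) u = u ^ (A - n) * (1 - u) ^ (B - n) *
      ((-1) ^ n * (descPochhammer ℝ n).eval (A + B) * (hypergeomPoly A B n).eval u) := by
  rw [iteratedDeriv_rpow_mul_one_sub_rpow hu, ← sum_leibniz_eq_eval_hypergeomPoly hAB,
    Finset.mul_sum]
  refine Finset.sum_congr rfl fun i hi => ?_
  have hi : i ≤ n := Finset.mem_range_succ_iff.1 hi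
  have hpow_u : u ^ (A - i) = u ^ (A - n) * u ^ (n - i) := by
    rw [← Real.rpow_natCast, ← Real.rpow_add hu.1, Nat.cast_sub hi]; ring_nf
  have hpow_v : (1 - u) ^ (B - (n - i : ℕ)) = (1 - u) ^ (B - n) * (1 - u) ^ i := by
    rw [← Real.rpow_natCast, ← Real.rpow_add (sub_pos.2 hu.2), Nat.cast_sub hi]; ring_nf
  rw [hpow_u, hpow_v, neg_pow]
  ring

theorem tendsto_iteratedDeriv_rpow_mul_one_sub_rpow_nhdsGT_zero {A B : ℝ} {j : ℕ}
    (hj : (j : ℝ) < A) :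
    Tendsto (iteratedDeriv j (fun u : ℝ => u ^ A * (1 - u) ^ B)) (𝓝[>] 0) (𝓝 0) := by
  have hA : ∀ i ∈ Finset.range (j + 1), 0 < A - i := fun i hi => by
    have : (i : ℝ) ≤ j := by exact_mod_cast Finset.mem_range_succ_iff.1 hi
    linarith
  have hF := tendsto_finsetSum (x := 𝓝 (0 : ℝ)) (Finset.range (j + 1)) fun i hi =>
    (show ContinuousAt (fun u : ℝ => (j.choose i : ℝ) * ((descPochhammer ℝ i).eval A *
        u ^ (A - i)) * ((-1) ^ (j - i) * (descPochhammer ℝ (j - i)).eval B *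
          (1 - u) ^ (B - (j - i : ℕ)))) 0 by
      fun_prop (disch := first | exact Or.inr (hA i hi).le | norm_num)).tendsto
  rw [Finset.sum_eq_zero fun i hi => by rw [Real.zero_rpow (hA i hi).ne']; ring] at hF
  refine (hF.mono_left nhdsWithin_le_nhds).congr' ?_
  filter_upwards [Ioo_mem_nhdsGT one_pos] with u hu
  exact (iteratedDeriv_rpow_mul_one_sub_rpow hu j).symm

theorem tendsto_iteratedDeriv_rpow_mul_one_sub_rpow_nhdsLT_one {A B : ℝ} {j : ℕ}
    (hj : (j : ℝ) < B) :
    Tendsto (iteratedDeriv j (fun u : ℝ => u ^ A * (1 - u) ^ B)) (𝓝[<] 1) (𝓝 0) := by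
  have hB : ∀ i ∈ Finset.range (j + 1), 0 < B - (j - i : ℕ) := fun i _ => by
    have : ((j - i : ℕ) : ℝ) ≤ j := by exact_mod_cast Nat.sub_le j i
    linarith
  have hF := tendsto_finsetSum (x := 𝓝 (1 : ℝ)) (Finset.range (j + 1)) fun i hi =>
    (show ContinuousAt (fun u : ℝ => (j.choose i : ℝ) * ((descPochhammer ℝ i).eval A *
        u ^ (A - i)) * ((-1) ^ (j - i) * (descPochhammer ℝ (j - i)).eval B *
          (1 - u) ^ (B - (j - i : ℕ)))) 1 by
      fun_prop (disch := first | exact Or.inr (hB i hi).le | norm_num)).tendsto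
  rw [Finset.sum_eq_zero fun i hi => by rw [sub_self, Real.zero_rpow (hB i hi).ne']; ring] at hF
  refine (hF.mono_left nhdsWithin_le_nhds).congr' ?_
  filter_upwards [Ioo_mem_nhdsLT one_pos] with u hu
  exact (iteratedDeriv_rpow_mul_one_sub_rpow hu j).symm

theorem exists_finset_deriv_eq_zero {f f' : ℝ → ℝ} {a b : ℝ} (hab : a < b)
    (hfa : Tendsto f (𝓝[>] a) (𝓝 0)) (hfb : Tendsto f (𝓝[<] b) (𝓝 0))
    (hf : ∀ x ∈ Ioo a b, HasDerivAt f (f' x) x) (s : Finset ℝ) (hs : ↑s ⊆ Ioo a b)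
    (hzero : ∀ x ∈ s, f x = 0) :
    ∃ t : Finset ℝ, t.card = s.card + 1 ∧ ↑t ⊆ Ioo a b ∧ ∀ x ∈ t, f' x = 0 := by
  induction s using Finset.induction_on_max generalizing b with
  | empty =>
    obtain ⟨c, hc, hc'⟩ := exists_hasDerivAt_eq_zero' hab hfa hfb hf
    exact ⟨{c}, rfl, by simpa using hc, by simpa using hc'⟩
  | insert z s hlt ih =>
    have hz : z ∈ Ioo a b := hs (Finset.mem_insert_self z s)
    have hfz : Tendsto f (𝓝 z) (𝓝 0) := by
      simpa [hzero z (Finset.mem_insert_self z s)] using (hf z hz).continuousAt.tendsto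
    obtain ⟨t, ht, hta, ht'⟩ := ih hz.1 (hfz.mono_left nhdsWithin_le_nhds)
      (fun x hx => hf x ⟨hx.1, hx.2.trans hz.2⟩)
      (fun x hx => ⟨(hs (Finset.mem_insert_of_mem hx)).1, hlt x hx⟩)
      (fun x hx => hzero x (Finset.mem_insert_of_mem hx))
    obtain ⟨c, hc, hc'⟩ := exists_hasDerivAt_eq_zero' hz.2
      (hfz.mono_left nhdsWithin_le_nhds) hfb fun x hx => hf x ⟨hz.1.trans hx.1, hx.2⟩
    have hct : c ∉ t := fun h => (hta h).2.not_gt hc.1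
    refine ⟨insert c t, ?_, ?_, ?_⟩
    · rw [Finset.card_insert_of_notMem hct,
        Finset.card_insert_of_notMem fun h => (hlt z h).false, ht]
    · intro x hx
      rcases Finset.mem_insert.1 hx with rfl | hx
      · exact ⟨hz.1.trans hc.1, hc.2⟩
      · exact ⟨(hta hx).1, (hta hx).2.trans hz.2⟩
    · intro x hx
      rcases Finset.mem_insert.1 hx with rfl | hx
      · exact hc'
      · exact ht' x hx

theorem Polynomial.roots_toFinset_eq_of_natDegree_le_card {R : Type*} [CommRing R] [IsDomain R]
    [DecidableEq R] {p : R[X]} (hp : p ≠ 0) {s : Finset R} (hs : ∀ x ∈ s, p.IsRoot x)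
    (hcard : p.natDegree ≤ s.card) : p.roots.toFinset = s :=
  (Finset.eq_of_subset_of_card_le
    (fun x hx => Multiset.mem_toFinset.2 ((mem_roots hp).2 (hs x hx)))
    ((Multiset.toFinset_card_le _).trans ((card_roots' p).trans hcard))).symm

theorem exists_finset_iteratedDeriv_rpow_mul_one_sub_rpow_eq_zero {A B : ℝ} {n : ℕ}
    (hA : (n : ℝ) - 1 < A) (hB : (n : ℝ) - 1 < B) {j : ℕ} (hj : j ≤ n) :
    ∃ s : Finset ℝ, s.card = j ∧ ↑s ⊆ Ioo (0 : ℝ) 1 ∧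
      ∀ x ∈ s, iteratedDeriv j (fun u : ℝ => u ^ A * (1 - u) ^ B) x = 0 := by
  induction j with
  | zero => exact ⟨∅, rfl, by simp, by simp⟩
  | succ j ih =>
    obtain ⟨s, hs, hs01, hzero⟩ := ih (by omega)
    have hjn : (j : ℝ) ≤ n - 1 := by
      rw [le_sub_iff_add_le]; exact_mod_cast hj
    obtain ⟨t, ht, ht01, ht'⟩ := exists_finset_deriv_eq_zero one_pos
      (tendsto_iteratedDeriv_rpow_mul_one_sub_rpow_nhdsGT_zero (B := B) (hjn.trans_lt hA))
      (tendsto_iteratedDeriv_rpow_mul_one_sub_rpow_nhdsLT_one (hjn.trans_lt hB))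
      (fun x hx => (contDiffOn_rpow_mul_one_sub_rpow A B).hasDerivAt_iteratedDeriv isOpen_Ioo hx)
      s hs01 hzero
    exact ⟨t, ht.trans (congrArg (· + 1) hs), ht01, ht'⟩

theorem exists_finset_eval_hypergeomPoly_eq_zero_iff {A B : ℝ} {n : ℕ}
    (hA : (n : ℝ) - 1 < A) (hB : (n : ℝ) - 1 < B) :
    ∃ s : Finset ℝ, s.card = n ∧ ↑s ⊆ Ioo (0 : ℝ) 1 ∧
      ∀ u, (hypergeomPoly A B n).eval u = 0 ↔ u ∈ s := by
  have hAB : (descPochhammer ℝ n).eval (A + B) ≠ 0 := by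
    rcases Nat.eq_zero_or_pos n with rfl | hn
    · simp
    · refine (descPochhammer_pos ?_).ne'
      have : (1 : ℝ) ≤ n := by exact_mod_cast hn
      linarith
  obtain ⟨s, hs, hs01, hzero⟩ :=
    exists_finset_iteratedDeriv_rpow_mul_one_sub_rpow_eq_zero hA hB le_rfl
  have hp : hypergeomPoly A B n ≠ 0 := fun h => by
    simpa [h] using coeff_hypergeomPoly_self A B n
  have hroots : (hypergeomPoly A B n).roots.toFinset = s := by
    refine roots_toFinset_eq_of_natDegree_le_card hp (fun u hu => ?_)
      (hs ▸ natDegree_hypergeomPoly_le A B n)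
    have h := hzero u hu
    rw [iteratedDeriv_rpow_mul_one_sub_rpow_eq_hypergeomPoly (hs01 hu) hAB] at h
    simpa [hAB, (Real.rpow_pos_of_pos (hs01 hu).1 _).ne',
      (Real.rpow_pos_of_pos (sub_pos.2 (hs01 hu).2) _).ne'] using h
  refine ⟨s, hs, hs01, fun u => ?_⟩
  rw [← hroots, Multiset.mem_toFinset, mem_roots hp, IsRoot.def]

theorem exists_finset_Peven_eq_zero_iff {α : ℝ} (hα : -1 < α) (q n : ℕ) :
    ∃ s : Finset ℝ, s.card = n ∧ ↑s ⊆ Ioo (0 : ℝ) 1 ∧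
      ∀ x, Peven α q n x = 0 ↔ x ^ 2 ∈ s := by
  obtain ⟨s, hs, hs01, hiff⟩ := exists_finset_eval_hypergeomPoly_eq_zero_iff (n := n)
    (A := q + 1 / 2 + n) (B := α + n) (by linarith [(q.cast_nonneg : (0 : ℝ) ≤ q)])
    (by linarith)
  exact ⟨s, hs, hs01, fun x => by rw [Peven_eq_eval_hypergeomPoly, hiff]⟩

theorem exists_finset_sq_mem_iff {s : Finset ℝ} (hs : ∀ t ∈ s, 0 < t) :
    ∃ X : Finset ℝ, X.card = 2 * s.card ∧ ∀ x, x ∈ X ↔ x ^ 2 ∈ s := by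
  have hinj : Set.InjOn Real.sqrt s := fun a ha b hb h =>
    (Real.sqrt_inj (hs a ha).le (hs b hb).le).1 h
  refine ⟨s.image Real.sqrt ∪ s.image (fun t => -Real.sqrt t), ?_, fun x => ?_⟩
  · rw [Finset.card_union_of_disjoint, Finset.card_image_of_injOn hinj,
      Finset.card_image_of_injOn fun a ha b hb h => hinj ha hb (neg_inj.1 h), two_mul]
    refine Finset.disjoint_left.2 fun x hx hx' => ?_
    obtain ⟨a, ha, rfl⟩ := Finset.mem_image.1 hx
    obtain ⟨b, hb, hab⟩ := Finset.mem_image.1 hx'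
    have := Real.sqrt_pos.2 (hs a ha)
    have := Real.sqrt_pos.2 (hs b hb)
    linarith
  · simp only [Finset.mem_union, Finset.mem_image]
    constructor
    · rintro (⟨t, ht, rfl⟩ | ⟨t, ht, rfl⟩) <;> simpa [Real.sq_sqrt (hs t ht).le] using ht
    · intro hx
      rcases le_or_gt 0 x with h | h
      · exact Or.inl ⟨x ^ 2, hx, Real.sqrt_sq h⟩
      · exact Or.inr ⟨x ^ 2, hx, by rw [Real.sqrt_sq_eq_abs, abs_of_neg h, neg_neg]⟩

theorem Finset.orderEmbOfFin_rev {α : Type*} [AddCommGroup α] [LinearOrder α]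
    [IsOrderedAddMonoid α] {s : Finset α} {k : ℕ} (h : s.card = k) (hs : ∀ x ∈ s, -x ∈ s)
    (i : Fin k) : s.orderEmbOfFin h i.rev = -s.orderEmbOfFin h i := by
  have hunique := Finset.orderEmbOfFin_unique h (f := fun i => -s.orderEmbOfFin h i.rev)
    (fun i => hs _ (s.orderEmbOfFin_mem h _)) fun i j hij => by simpa using Fin.rev_lt_rev.2 hij
  rw [← congrFun hunique i.rev, Fin.rev_rev]

theorem exists_symmetric_strictMono_sq_mem_iff {s : Finset ℝ} {n : ℕ} (hs : s.card = n)
    (hs01 : ↑s ⊆ Ioo (0 : ℝ) 1) :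
    ∃ x : Fin (2 * n) → ℝ, StrictMono x ∧ (∀ i, x i.rev = -x i) ∧ (∀ i, -1 < x i) ∧
      ∀ t, t ^ 2 ∈ s ↔ ∃ i, x i = t := by
  obtain ⟨X, hX, hXs⟩ := exists_finset_sq_mem_iff fun t ht => (hs01 ht).1
  have hXn : X.card = 2 * n := hX.trans (by rw [hs])
  refine ⟨X.orderEmbOfFin hXn, (X.orderEmbOfFin hXn).strictMono,
    Finset.orderEmbOfFin_rev hXn fun x hx => (hXs _).2 (by simpa using (hXs x).1 hx),
    fun i => ?_, fun t => ?_⟩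
  · have := (hs01 ((hXs _).1 (X.orderEmbOfFin_mem hXn i))).2
    nlinarith
  · rw [← hXs, ← Finset.mem_coe, ← Finset.range_orderEmbOfFin X hXn, Set.mem_range]

theorem not_forall_lt_of_rev_eq_neg {α : Type*} [AddCommGroup α] [LinearOrder α]
    [IsOrderedAddMonoid α] {k : ℕ} (hk : 0 < k) {x y : Fin k → α}
    (hx : ∀ i, x i.rev = -x i) (hy : ∀ i, y i.rev = -y i) : ¬ ∀ i, x i < y i := fun h =>
  (h ⟨0, hk⟩).asymm (by simpa [hx, hy] using h (Fin.rev ⟨0, hk⟩))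

/-- `P_{2n}^{α,q}` has `2n` distinct real zeros `x_1 < ⋯ < x_{2n}` and `P_{2n+1}^{α,q}`
has `2n+1` distinct real zeros `y_1 < ⋯ < y_{2n+1}`, but the zeros do not interlace:
it fails that `y_k < x_k < y_{k+1}` for every `k`. -/
theorem zeros_do_not_interlace (α : ℝ) (hα : -1 < α) (q : ℕ) (n : ℕ) (hn : 1 ≤ n) :
    ∃ (x : Fin (2 * n) → ℝ) (y : Fin (2 * n + 1) → ℝ),
      StrictMono x ∧ StrictMono y ∧
      (∀ t : ℝ, Peven α q n t = 0 ↔ ∃ i, x i = t) ∧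
      (∀ t : ℝ, Podd α q n t = 0 ↔ ∃ i, y i = t) ∧
      ¬ (∀ i : Fin (2 * n), y i.castSucc < x i ∧ x i < y i.succ) := by
  obtain ⟨s, hs, hs01, hPeven⟩ := exists_finset_Peven_eq_zero_iff hα q n
  obtain ⟨s', hs', hs'01, hPeven'⟩ :=
    exists_finset_Peven_eq_zero_iff (by linarith : -1 < α + 1) q n
  obtain ⟨x, hx, hx_rev, -, hxs⟩ := exists_symmetric_strictMono_sq_mem_iff hs hs01
  obtain ⟨y, hy, hy_rev, hy_gt, hys⟩ := exists_symmetric_strictMono_sq_mem_iff hs' hs'01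
  refine ⟨x, Fin.cons (-1) y, hx, Fin.strictMono_cons.2 ⟨hy_gt, hy⟩,
    fun t => (hPeven t).trans (hxs t), fun t => ?_, fun h => ?_⟩
  · rw [Podd, mul_eq_zero, hPeven', hys, Fin.exists_fin_succ]
    simp [eq_neg_iff_add_eq_zero, add_comm, eq_comm]
  · exact not_forall_lt_of_rev_eq_neg (by omega) hx_rev hy_rev fun i => by simpa using (h i).2
end
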